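/- arXiv:2112.07387 — 5 statements merged into one kernel-verified Lean document; each statement's English description precedes it below -/
import Mathlib

section
/- Let n ∈ ℕ (n ≥ 1) and let I be a proper open subinterval of ℝ. If f : I → ℝ is Jensen convex of order n, then there exists a continuous function g : I → ℝ that is convex of order n on I and satisfies g(x) = f(x) for every rational x ∈ I. -/
/-!
At rational nodes an `n`-Jensen convex function already has nonnegative divided differences of
order `n + 1`. Finitely many rationals lie on a grid `(1/N)ℤ`; on equally spaced nodes the divided
difference is `Δ_h^{n+1} f / ((n+1)! h^{n+1})`, and inserting a missing grid point between the
extreme nodes writes any divided difference on the grid as a nonnegative combination of two with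
shorter span. So `f` is `n`-convex on `I ∩ ℚ`.

For `n ≥ 1` this makes `f` locally Lipschitz on `I ∩ ℚ`: for `n = 1` the slopes of `f` are
monotone, and in general the slope `y ↦ [c, y; f]` is `(n-1)`-convex, while
`f y = f c + (y - c) [c, y; f]`. Hence `f` extends continuously from `I ∩ ℚ` to `I`, and the
divided differences of the extension are limits of divided differences at rational nodes.
-/

open Finset

/-- The difference operator `Δ_h`. -/
noncomputable def dOp (h : ℝ) (f : ℝ → ℝ) : ℝ → ℝ := fun x => f (x + h) - f x

/-- Iterated difference operator `Δ_{h_1} ⋯ Δ_{h_k}` for a list `[h_1, …, h_k]`. -/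
noncomputable def dList (l : List ℝ) (f : ℝ → ℝ) : ℝ → ℝ := l.foldr dOp f

/-- The divided difference `[x_0, …, x_m; f]`. -/
noncomputable def divDiff (m : ℕ) (x : Fin (m + 1) → ℝ) (f : ℝ → ℝ) : ℝ :=
  ∑ i, f (x i) / ∏ j ∈ Finset.univ.erase i, (x i - x j)

/-- `I` is a proper open subinterval of the real line. -/
def ProperOpenInterval (I : Set ℝ) : Prop :=
  IsOpen I ∧ I.OrdConnected ∧ I.Nonempty ∧ I ≠ Set.univ

/-- A real number which is rational. -/
def IsRatR (x : ℝ) : Prop := ∃ q : ℚ, (q : ℝ) = x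

/-- `f` is Wright convex of order `n` on `I`. -/
def WrightConvexOrder (n : ℕ) (I : Set ℝ) (f : ℝ → ℝ) : Prop :=
  ∀ l : List ℝ, l.length = n + 1 → (∀ h ∈ l, 0 < h) →
    ∀ x : ℝ, x ∈ I → x + l.sum ∈ I → 0 ≤ dList l f x

/-- `f` is Jensen convex of order `n` on `I`. -/
def JensenConvexOrder (n : ℕ) (I : Set ℝ) (f : ℝ → ℝ) : Prop :=
  ∀ h : ℝ, 0 < h → ∀ x : ℝ, x ∈ I → x + (n + 1) * h ∈ I → 0 ≤ (dOp h)^[n + 1] f x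

/-- `f` is convex of order `n` on `I`. -/
def ConvexOrder (n : ℕ) (I : Set ℝ) (f : ℝ → ℝ) : Prop :=
  ∀ x : Fin (n + 2) → ℝ, Function.Injective x → (∀ i, x i ∈ I) →
    0 ≤ divDiff (n + 1) x f

open Filter Topology

noncomputable def dividedDiff (S : Finset ℝ) (f : ℝ → ℝ) : ℝ :=
  ∑ t ∈ S, f t / ∏ s ∈ S.erase t, (t - s)

section DividedDiff

variable {T : Finset ℝ}

theorem dividedDiff_erase {a : ℝ} (ha : a ∈ T) (f : ℝ → ℝ) :
    dividedDiff (T.erase a) f = ∑ t ∈ T, (t - a) * (f t / ∏ s ∈ T.erase t, (t - s)) := by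
  rw [← add_sum_erase T _ ha, sub_self, zero_mul, zero_add, dividedDiff]
  refine sum_congr rfl fun t ht => ?_
  have hta : t - a ≠ 0 := sub_ne_zero.2 (ne_of_mem_erase ht)
  have haT : a ∈ T.erase t := mem_erase.2 ⟨(ne_of_mem_erase ht).symm, ha⟩
  rw [← mul_prod_erase _ _ haT, erase_right_comm, mul_div_assoc',
    mul_div_mul_left _ _ hta]

theorem dividedDiff_erase_sub_erase {u v : ℝ} (hu : u ∈ T) (hv : v ∈ T) (f : ℝ → ℝ) :
    dividedDiff (T.erase u) f - dividedDiff (T.erase v) f = (v - u) * dividedDiff T f := by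
  rw [dividedDiff_erase hu, dividedDiff_erase hv, ← sum_sub_distrib, dividedDiff,
    mul_sum]
  exact sum_congr rfl fun t _ => by ring

theorem sub_mul_dividedDiff_erase {a b m : ℝ} (ha : a ∈ T) (hb : b ∈ T) (hm : m ∈ T)
    (f : ℝ → ℝ) :
    (b - a) * dividedDiff (T.erase m) f
      = (b - m) * dividedDiff (T.erase a) f + (m - a) * dividedDiff (T.erase b) f := by
  simp only [dividedDiff_erase ha, dividedDiff_erase hb, dividedDiff_erase hm, mul_sum,
    ← sum_add_distrib]
  exact sum_congr rfl fun t _ => by ring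

theorem dividedDiff_erase_nonneg_of_lt_of_lt {a b m : ℝ} {f : ℝ → ℝ} (ha : a ∈ T) (hb : b ∈ T)
    (hm : m ∈ T) (ham : a < m) (hmb : m < b) (hfa : 0 ≤ dividedDiff (T.erase a) f)
    (hfb : 0 ≤ dividedDiff (T.erase b) f) : 0 ≤ dividedDiff (T.erase m) f := by
  refine nonneg_of_mul_nonneg_right ?_ (sub_pos.2 (ham.trans hmb))
  rw [sub_mul_dividedDiff_erase ha hb hm]
  exact add_nonneg (mul_nonneg (sub_nonneg.2 hmb.le) hfa) (mul_nonneg (sub_nonneg.2 ham.le) hfb)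

theorem dividedDiff_pair {a b : ℝ} (hab : a ≠ b) (f : ℝ → ℝ) :
    dividedDiff {a, b} f = slope f a b := by
  rw [dividedDiff, sum_pair hab, erase_insert (by simpa using hab),
    erase_insert_of_ne hab, erase_singleton, insert_empty_eq]
  simp only [prod_singleton, slope_def_field]
  field_simp
  ring

theorem dividedDiff_const (hT : 2 ≤ T.card) (c : ℝ) : dividedDiff T (fun _ => c) = 0 := by
  induction T using strongInduction with
  | _ T ih =>
    obtain ⟨u, hu, v, hv, huv⟩ := one_lt_card.1 hT
    obtain hT2 | hT3 := hT.eq_or_lt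
    · obtain ⟨a, b, hab, rfl⟩ := card_eq_two.1 hT2.symm
      simp [dividedDiff_pair hab, slope_def_field]
    · have key := dividedDiff_erase_sub_erase hu hv (fun _ => c)
      rw [ih _ (erase_ssubset hu) (by rw [card_erase_of_mem hu]; omega),
        ih _ (erase_ssubset hv) (by rw [card_erase_of_mem hv]; omega),
        sub_zero, eq_comm, mul_eq_zero] at key
      exact key.resolve_left (sub_ne_zero.2 huv.symm)

theorem dividedDiff_sub_const (hT : 2 ≤ T.card) (f : ℝ → ℝ) (c : ℝ) :
    dividedDiff T (fun x => f x - c) = dividedDiff T f := by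
  have h := dividedDiff_const hT c
  simp only [dividedDiff, sub_div, sum_sub_distrib] at h ⊢
  rw [h, sub_zero]

theorem dividedDiff_insert_eq_slope {S : Finset ℝ} {c : ℝ} (hc : c ∉ S) (hS : S.Nonempty)
    (f : ℝ → ℝ) : dividedDiff (insert c S) f = dividedDiff S (slope f c) := by
  have hcard : 2 ≤ (insert c S).card := by
    rw [card_insert_of_notMem hc]; exact Nat.succ_le_succ hS.card_pos
  rw [← dividedDiff_sub_const hcard f (f c), dividedDiff, sum_insert hc, sub_self, zero_div,
    zero_add, dividedDiff]
  refine sum_congr rfl fun t ht => ?_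
  have hct : c ≠ t := fun h => hc (h ▸ ht)
  rw [erase_insert_of_ne hct, prod_insert fun h => hc (mem_of_mem_erase h),
    slope_def_field, div_div]

end DividedDiff

theorem divDiff_eq_dividedDiff {m : ℕ} {x : Fin (m + 1) → ℝ} (hx : Function.Injective x)
    (f : ℝ → ℝ) : divDiff m x f = dividedDiff (univ.image x) f := by
  rw [dividedDiff, divDiff, sum_image fun a _ b _ h => hx h]
  refine sum_congr rfl fun i _ => ?_
  rw [← image_erase hx, prod_image fun a _ b _ h => hx h]

theorem convexOrder_iff_dividedDiff_nonneg {n : ℕ} {S : Set ℝ} {f : ℝ → ℝ} :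
    ConvexOrder n S f ↔ ∀ T : Finset ℝ, ↑T ⊆ S → T.card = n + 2 → 0 ≤ dividedDiff T f := by
  constructor
  · intro hf T hTS hT
    have h := hf (T.orderEmbOfFin hT) (T.orderEmbOfFin hT).injective
      fun i => hTS (T.orderEmbOfFin_mem hT i)
    rwa [divDiff_eq_dividedDiff (T.orderEmbOfFin hT).injective,
      image_orderEmbOfFin_univ] at h
  · intro hf x hx hxS
    rw [divDiff_eq_dividedDiff hx]
    refine hf _ (by simpa [Set.subset_def] using hxS) ?_
    rw [card_image_of_injective _ hx, card_univ, Fintype.card_fin]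

theorem ConvexOrder.congr {n : ℕ} {S : Set ℝ} {f g : ℝ → ℝ} (hf : ConvexOrder n S f)
    (hfg : Set.EqOn f g S) : ConvexOrder n S g := by
  intro x hx hxS
  convert hf x hx hxS using 1
  exact sum_congr rfl fun i _ => by rw [hfg (hxS i)]

theorem iterate_dOp_succ_apply (h : ℝ) (m : ℕ) (f : ℝ → ℝ) (x : ℝ) :
    (dOp h)^[m + 1] f x = (dOp h)^[m] f (x + h) - (dOp h)^[m] f x := by
  rw [Function.iterate_succ_apply']
  rfl

theorem dividedDiff_image_Icc {h : ℝ} (hh : h ≠ 0) (f : ℝ → ℝ) (m : ℕ) (c : ℤ) :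
    dividedDiff ((Icc c (c + m)).image fun k : ℤ => k * h) f
      = (dOp h)^[m] f (c * h) / (m.factorial * h ^ m) := by
  induction m generalizing c with
  | zero => simp [dividedDiff]
  | succ m ih =>
    have he : Function.Injective fun k : ℤ => (k : ℝ) * h :=
      fun a b hab => by exact_mod_cast mul_right_cancel₀ hh hab
    have hc : c ∈ Icc c (c + (m + 1 : ℕ)) := by simp; omega
    have hcm : c + (m + 1 : ℕ) ∈ Icc c (c + (m + 1 : ℕ)) := by simp; omega
    have key := dividedDiff_erase_sub_erase (mem_image_of_mem (fun k : ℤ => (k : ℝ) * h) hc)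
      (mem_image_of_mem (fun k : ℤ => (k : ℝ) * h) hcm) f
    have e1 : (Icc c (c + (m + 1 : ℕ))).erase c = Icc (c + 1) (c + 1 + m) := by
      ext k; simp; omega
    have e2 : (Icc c (c + (m + 1 : ℕ))).erase (c + (m + 1 : ℕ)) = Icc c (c + m) := by
      ext k; simp; omega
    rw [← image_erase he, ← image_erase he, e1, e2, ih, ih,
      div_sub_div_same] at key
    have hc1 : ((c + 1 : ℤ) : ℝ) * h = c * h + h := by push_cast; ring
    rw [hc1, div_eq_iff (by positivity)] at key
    rw [iterate_dOp_succ_apply, eq_div_iff (by positivity), key, Nat.factorial_succ]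
    push_cast
    ring

theorem dividedDiff_image_nonneg_of_Icc {e : ℤ → ℝ} (he : StrictMono e) {f : ℝ → ℝ} {n : ℕ}
    {a b : ℤ}
    (hcons : ∀ c, a ≤ c → c + (n + 1 : ℕ) ≤ b →
      0 ≤ dividedDiff ((Icc c (c + (n + 1 : ℕ))).image e) f)
    {K : Finset ℤ} (hK : K ⊆ Icc a b) (hcard : K.card = n + 2) :
    0 ≤ dividedDiff (K.image e) f := by
  induction hd : (b - a).toNat using Nat.strong_induction_on generalizing a b K with
  | _ d ih =>
  have hKab := card_le_card hK
  rw [Int.card_Icc] at hKab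
  by_cases hshort : b - a ≤ n + 1
  · have hb : b = a + (n + 1 : ℕ) := by push_cast; omega
    subst hb
    rw [eq_of_subset_of_card_le hK (by rw [Int.card_Icc]; omega)]
    exact hcons a le_rfl le_rfl
  have shrink : ∀ (K' : Finset ℤ) a' b', a ≤ a' → b' ≤ b → (b' - a').toNat < d →
      K' ⊆ Icc a' b' → K'.card = n + 2 → 0 ≤ dividedDiff (K'.image e) f :=
    fun K' a' b' ha' hb' hlt hK' hcard' =>
      ih _ hlt (fun c hc hc' => hcons c (ha'.trans hc) (hc'.trans hb')) hK' hcard' rfl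
  have hsubL : ∀ {K' : Finset ℤ}, K' ⊆ Icc a b → a ∉ K' → K' ⊆ Icc (a + 1) b := fun hK' ha => by
    rw [Icc_add_one_left_eq_Ioc, ← Icc_erase_left]
    exact subset_erase.2 ⟨hK', ha⟩
  have hsubR : ∀ {K' : Finset ℤ}, K' ⊆ Icc a b → b ∉ K' → K' ⊆ Icc a (b - 1) := fun hK' hb => by
    rw [Icc_sub_one_right_eq_Ico, ← Icc_erase_right]
    exact subset_erase.2 ⟨hK', hb⟩
  by_cases ha : a ∈ K
  swap
  · exact shrink K (a + 1) b (by omega) le_rfl (by omega) (hsubL hK ha) hcard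
  by_cases hb : b ∈ K
  swap
  · exact shrink K a (b - 1) le_rfl (by omega) (by omega) (hsubR hK hb) hcard
  obtain ⟨m, hm, hmK⟩ := exists_of_ssubset
    (hK.ssubset_of_ne fun h => by rw [h, Int.card_Icc] at hcard; omega)
  have ham : a < m := lt_of_le_of_ne (mem_Icc.1 hm).1 fun h => hmK (h ▸ ha)
  have hmb : m < b := lt_of_le_of_ne (mem_Icc.1 hm).2 fun h => hmK (h ▸ hb)
  set T := insert m K
  have hT : T ⊆ Icc a b := insert_subset hm hK
  have hTcard : (T.erase a).card = n + 2 ∧ (T.erase b).card = n + 2 := by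
    rw [card_erase_of_mem (mem_insert_of_mem ha),
      card_erase_of_mem (mem_insert_of_mem hb), card_insert_of_notMem hmK]
    omega
  have hTa := shrink (T.erase a) (a + 1) b (by omega) le_rfl (by omega)
    (hsubL ((erase_subset a T).trans hT) (notMem_erase a T)) hTcard.1
  have hTb := shrink (T.erase b) a (b - 1) le_rfl (by omega) (by omega)
    (hsubR ((erase_subset b T).trans hT) (notMem_erase b T)) hTcard.2
  rw [image_erase he.injective] at hTa hTb
  rw [← erase_insert hmK, image_erase he.injective]
  exact dividedDiff_erase_nonneg_of_lt_of_lt (mem_image_of_mem e (mem_insert_of_mem ha))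
    (mem_image_of_mem e (mem_insert_of_mem hb)) (mem_image_of_mem e (mem_insert_self m K))
    (he ham) (he hmb) hTa hTb

theorem JensenConvexOrder.dividedDiff_image_nonneg {n : ℕ} {I : Set ℝ} {f : ℝ → ℝ}
    (hf : JensenConvexOrder n I f) (hI : I.OrdConnected) {h : ℝ} (hh : 0 < h) {a b : ℤ}
    (ha : (a : ℝ) * h ∈ I) (hb : (b : ℝ) * h ∈ I) {K : Finset ℤ} (hK : K ⊆ Icc a b)
    (hcard : K.card = n + 2) : 0 ≤ dividedDiff (K.image fun k : ℤ => (k : ℝ) * h) f := by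
  have hmem : ∀ k : ℤ, a ≤ k → k ≤ b → (k : ℝ) * h ∈ I := fun k hak hkb =>
    hI.out ha hb ⟨by gcongr, by gcongr⟩
  refine dividedDiff_image_nonneg_of_Icc (Int.cast_strictMono.mul_const hh)
    (fun c hac hcb => ?_) hK hcard
  rw [dividedDiff_image_Icc hh.ne']
  refine div_nonneg (hf h hh _ (hmem c hac (by omega)) ?_) (by positivity)
  convert hmem _ (by omega) hcb using 1
  push_cast
  ring

theorem exists_finset_int_image_eq {S : Finset ℝ} (hS : ↑S ⊆ Set.range ((↑) : ℚ → ℝ)) :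
    ∃ N : ℕ, 0 < N ∧ ∃ K : Finset ℤ, K.image (fun k : ℤ => (k : ℝ) * (N : ℝ)⁻¹) = S := by
  classical
  rw [← Set.image_univ, subset_set_image_iff] at hS
  obtain ⟨Q, -, rfl⟩ := hS
  refine ⟨∏ p ∈ Q, p.den, prod_pos fun p _ => p.pos,
    Q.image fun q => q.num * ((∏ p ∈ Q, p.den) / q.den : ℕ), ?_⟩
  rw [image_image]
  refine image_congr fun q hq => ?_
  have hN : ((∏ p ∈ Q, p.den : ℕ) : ℝ) ≠ 0 := by positivity
  simp only [Function.comp_apply]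
  rw [Int.cast_mul, Int.cast_natCast, Nat.cast_div (dvd_prod_of_mem _ hq) (by positivity),
    Rat.cast_def]
  push_cast
  field_simp

theorem JensenConvexOrder.convexOrder_inter_range_ratCast {n : ℕ} {I : Set ℝ} {f : ℝ → ℝ}
    (hf : JensenConvexOrder n I f) (hI : I.OrdConnected) :
    ConvexOrder n (I ∩ Set.range ((↑) : ℚ → ℝ)) f := by
  rw [convexOrder_iff_dividedDiff_nonneg]
  intro S hS hcard
  obtain ⟨N, hN, K, rfl⟩ := exists_finset_int_image_eq (hS.trans Set.inter_subset_right)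
  have hN' : (0 : ℝ) < (N : ℝ)⁻¹ := by positivity
  rw [card_image_of_injective _ (Int.cast_strictMono.mul_const hN').injective] at hcard
  have hK : K.Nonempty := card_pos.1 (by omega)
  have hmem : ∀ k ∈ K, (k : ℝ) * (N : ℝ)⁻¹ ∈ I := fun k hk =>
    (hS (mem_coe.2 (mem_image_of_mem _ hk))).1
  exact hf.dividedDiff_image_nonneg hI hN' (hmem _ (K.min'_mem hK)) (hmem _ (K.max'_mem hK))
    (fun k hk => mem_Icc.2 ⟨K.min'_le k hk, K.le_max' k hk⟩) hcard

theorem ConvexOrder.slope_le_slope {S : Set ℝ} {f : ℝ → ℝ} (hf : ConvexOrder 1 S f) {a b c : ℝ}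
    (ha : a ∈ S) (hb : b ∈ S) (hc : c ∈ S) (hab : a < b) (hbc : b < c) :
    slope f a b ≤ slope f b c := by
  have hT : (({a, b, c} : Finset ℝ) : Set ℝ) ⊆ S := by
    simp [Set.insert_subset_iff, ha, hb, hc]
  have hcard : ({a, b, c} : Finset ℝ).card = 1 + 2 := by
    rw [card_insert_of_notMem (by simp [hab.ne, (hab.trans hbc).ne]),
      card_pair hbc.ne]
  have key := dividedDiff_erase_sub_erase (T := {a, b, c}) (u := a) (v := c) (by simp) (by simp) f
  rw [erase_insert (by simp [hab.ne, (hab.trans hbc).ne]),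
    erase_insert_of_ne (hab.trans hbc).ne, erase_insert_of_ne hbc.ne,
    erase_singleton, insert_empty_eq, dividedDiff_pair hbc.ne, dividedDiff_pair hab.ne] at key
  have := mul_nonneg (sub_nonneg.2 (hab.trans hbc).le)
    (convexOrder_iff_dividedDiff_nonneg.1 hf _ hT hcard)
  linarith

theorem ConvexOrder.convexOrder_slope {m : ℕ} {S : Set ℝ} {f : ℝ → ℝ} (hf : ConvexOrder (m + 1) S f)
    {c : ℝ} (hc : c ∈ S) : ConvexOrder m (S \ {c}) (slope f c) := by
  rw [convexOrder_iff_dividedDiff_nonneg] at hf ⊢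
  intro T hT hcard
  have hcT : c ∉ T := fun h => (hT h).2 rfl
  rw [← dividedDiff_insert_eq_slope hcT (card_pos.1 (by omega))]
  refine hf _ ?_ (by rw [card_insert_of_notMem hcT, hcard])
  rw [coe_insert]
  exact Set.insert_subset hc fun x hx => (hT hx).1

theorem lipschitzOnWith_of_abs_slope_le {f : ℝ → ℝ} {s : Set ℝ} {K : ℝ}
    (h : ∀ y ∈ s, ∀ z ∈ s, y < z → |slope f y z| ≤ K) : LipschitzOnWith K.toNNReal f s := by
  have key : ∀ y ∈ s, ∀ z ∈ s, y < z → dist (f y) (f z) ≤ K * dist y z := by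
    intro y hy z hz hyz
    rw [dist_comm, dist_comm y, Real.dist_eq, Real.dist_eq, ← vsub_eq_sub (f z),
      ← sub_smul_slope f y z, smul_eq_mul, abs_mul, mul_comm]
    exact mul_le_mul_of_nonneg_right (h y hy z hz hyz) (abs_nonneg _)
  refine LipschitzOnWith.of_dist_le' fun y hy z hz => ?_
  rcases lt_trichotomy y z with hyz | rfl | hzy
  · exact key y hy z hz hyz
  · simp
  · rw [dist_comm, dist_comm y]
    exact key z hz y hy hzy

theorem LipschitzOnWith.mul_of_abs_le {α : Type*} [PseudoMetricSpace α] {u v : α → ℝ}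
    {s : Set α} {Ku Kv : NNReal} {A B : ℝ} (hu : LipschitzOnWith Ku u s)
    (hv : LipschitzOnWith Kv v s) (hA : ∀ x ∈ s, |u x| ≤ A) (hB : ∀ x ∈ s, |v x| ≤ B) :
    LipschitzOnWith (A * Kv + B * Ku).toNNReal (fun x => u x * v x) s := by
  refine LipschitzOnWith.of_dist_le' fun x hx y hy => ?_
  have hu' := hu.dist_le_mul x hx y hy
  have hv' := hv.dist_le_mul x hx y hy
  rw [Real.dist_eq] at hu' hv' ⊢
  calc |u x * v x - u y * v y| = |u x * (v x - v y) + v y * (u x - u y)| := by ring_nf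
    _ ≤ |u x| * |v x - v y| + |v y| * |u x - u y| := by
      rw [← abs_mul, ← abs_mul]; exact abs_add_le _ _
    _ ≤ A * (Kv * dist x y) + B * (Ku * dist x y) := by
      gcongr
      · exact (abs_nonneg _).trans (hA x hx)
      · exact hA x hx
      · exact (abs_nonneg _).trans (hB y hy)
      · exact hB y hy
    _ = (A * Kv + B * Ku) * dist x y := by ring

section LocallyLipschitz

variable {I D : Set ℝ} {f : ℝ → ℝ} {x : ℝ}

theorem ConvexOrder.exists_lipschitzOnWith_of_one (hI : IsOpen I) (hD : Dense D)
    (hf : ConvexOrder 1 (I ∩ D) f) (hx : x ∈ I) :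
    ∃ U ∈ 𝓝 x, ∃ K, LipschitzOnWith K f (D ∩ U) := by
  obtain ⟨ε, hε, hball⟩ := Metric.isOpen_iff.1 hI x hx
  have hmem : ∀ y ∈ D, x - ε < y → y < x + ε → y ∈ I ∩ D := fun y hyD h₁ h₂ =>
    ⟨hball (by rw [Metric.mem_ball, Real.dist_eq, abs_lt]; constructor <;> linarith), hyD⟩
  obtain ⟨p₁, hp₁D, hp₁⟩ := hD.exists_between (show x - ε < x by linarith)
  obtain ⟨p₂, hp₂D, hp₂⟩ := hD.exists_between hp₁.2
  obtain ⟨r₁, hr₁D, hr₁⟩ := hD.exists_between (show x < x + ε by linarith)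
  obtain ⟨r₂, hr₂D, hr₂⟩ := hD.exists_between hr₁.2
  have hp₁S := hmem p₁ hp₁D hp₁.1 (by linarith [hp₁.2])
  have hp₂S := hmem p₂ hp₂D (by linarith [hp₁.1, hp₂.1]) (by linarith [hp₂.2])
  have hr₁S := hmem r₁ hr₁D (by linarith [hr₁.1]) hr₁.2
  have hr₂S := hmem r₂ hr₂D (by linarith [hr₁.1, hr₂.1]) hr₂.2
  refine ⟨Set.Ioo p₂ r₁, Ioo_mem_nhds hp₂.2 hr₁.1, _,
    lipschitzOnWith_of_abs_slope_le (K := max |slope f p₁ p₂| |slope f r₁ r₂|) ?_⟩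
  rintro y ⟨hyD, hy⟩ z ⟨hzD, hz⟩ hyz
  have hyS := hmem y hyD (by linarith [hp₁.1, hp₂.1, hy.1]) (by linarith [hr₁.2, hy.2])
  have hzS := hmem z hzD (by linarith [hp₁.1, hp₂.1, hz.1]) (by linarith [hr₁.2, hz.2])
  -- the slope of `f` over `[y, z]` is squeezed between the slopes over `[p₁, p₂]` and `[r₁, r₂]`
  have h₁ := hf.slope_le_slope hp₁S hp₂S hyS hp₂.1 hy.1
  have h₂ := hf.slope_le_slope hp₂S hyS hzS hy.1 hyz
  have h₃ := hf.slope_le_slope hyS hzS hr₁S hyz hz.2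
  have h₄ := hf.slope_le_slope hzS hr₁S hr₂S hz.2 hr₂.1
  rw [abs_le]
  constructor <;> linarith [neg_abs_le (slope f p₁ p₂), le_abs_self (slope f r₁ r₂),
    le_max_left |slope f p₁ p₂| |slope f r₁ r₂|, le_max_right |slope f p₁ p₂| |slope f r₁ r₂|]

theorem ConvexOrder.exists_lipschitzOnWith (hI : IsOpen I) (hD : Dense D) {m : ℕ} (hm : 1 ≤ m)
    (hf : ConvexOrder m (I ∩ D) f) (hx : x ∈ I) :
    ∃ U ∈ 𝓝 x, ∃ K, LipschitzOnWith K f (D ∩ U) := by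
  induction m, hm using Nat.le_induction generalizing D f with
  | base => exact hf.exists_lipschitzOnWith_of_one hI hD hx
  | succ m hm ih =>
  obtain ⟨ε, hε, hball⟩ := Metric.isOpen_iff.1 hI x hx
  obtain ⟨c, hcD, hc⟩ := hD.exists_between (show x - ε < x by linarith)
  have hcI : c ∈ I :=
    hball (by rw [Metric.mem_ball, Real.dist_eq, abs_lt]; constructor <;> linarith [hc.1, hc.2])
  have hg : ConvexOrder m (I ∩ (D \ {c})) (slope f c) := by
    rw [← Set.inter_sdiff_assoc]
    exact hf.convexOrder_slope ⟨hcI, hcD⟩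
  obtain ⟨U, hU, K, hK⟩ := ih (hD.sdiff_singleton c) hg
  obtain ⟨G, hG, hGg⟩ := hK.extend_real
  obtain ⟨B, hB⟩ := (hG.isBounded_image (Metric.isBounded_Ioo c (2 * x - c))).exists_norm_le
  obtain ⟨L, hL⟩ : ∃ L, LipschitzOnWith L (fun y => (y - c) * G y) (Set.Ioo c (2 * x - c)) :=
    ⟨_, (LipschitzWith.id.sub (LipschitzWith.const c)).lipschitzOnWith.mul_of_abs_le
      hG.lipschitzOnWith (A := 2 * (x - c))
      (fun y hy => abs_le.2 ⟨by simp only [id]; linarith [hy.1, hc.2],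
        by simp only [id]; linarith [hy.2]⟩)
      (fun y hy => hB _ (Set.mem_image_of_mem G hy))⟩
  have hfG : ∀ y ∈ D ∩ (U ∩ Set.Ioo c (2 * x - c)), f y = f c + (y - c) * G y := by
    rintro y ⟨hyD, hyU, hy⟩
    rw [← hGg ⟨⟨hyD, ne_of_gt hy.1⟩, hyU⟩, ← smul_eq_mul, sub_smul_slope, vsub_eq_sub]
    ring
  refine ⟨U ∩ Set.Ioo c (2 * x - c), inter_mem hU (Ioo_mem_nhds hc.2 (by linarith [hc.2])), L,
    LipschitzOnWith.of_dist_le_mul fun y hy z hz => ?_⟩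
  rw [Real.dist_eq, hfG y hy, hfG z hz, add_sub_add_left_eq_sub, ← Real.dist_eq]
  exact hL.dist_le_mul y hy.2.2 z hz.2.2

end LocallyLipschitz

theorem exists_continuousOn_eqOn_of_lipschitzOnWith {I D : Set ℝ} {f : ℝ → ℝ}
    (hID : I ⊆ closure D) (hf : ∀ x ∈ I, ∃ U ∈ 𝓝 x, ∃ K, LipschitzOnWith K f (D ∩ U)) :
    ∃ g : ℝ → ℝ, ContinuousOn g I ∧ Set.EqOn g f (I ∩ D) := by
  have hlim : ∀ x ∈ I, ∃ F : ℝ → ℝ, Tendsto f (𝓝[D] x) (𝓝 (F x)) ∧ (x ∈ D → F x = f x) := by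
    intro x hx
    obtain ⟨U, hU, K, hK⟩ := hf x hx
    obtain ⟨F, hF, hfF⟩ := hK.extend_real
    refine ⟨F, ?_, fun hxD => (hfF ⟨hxD, mem_of_mem_nhds hU⟩).symm⟩
    exact (hF.continuous.tendsto x |>.mono_left nhdsWithin_le_nhds).congr'
      (eventuallyEq_of_mem (inter_mem_nhdsWithin D hU) hfF).symm
  refine ⟨extendFrom D f, continuousOn_extendFrom hID fun x hx => ?_, fun x hx => ?_⟩
  · obtain ⟨F, hF, -⟩ := hlim x hx
    exact ⟨_, hF⟩
  · obtain ⟨F, hF, hFf⟩ := hlim x hx.1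
    exact extendFrom_eq (hID hx.1) (hFf hx.2 ▸ hF)

theorem isOpen_setOf_injective {ι X : Type*} [Finite ι] [TopologicalSpace X] [T2Space X] :
    IsOpen {x : ι → X | Function.Injective x} := by
  simp only [Function.injective_iff_pairwise_ne, Pairwise, Set.ofPred_forall]
  exact isOpen_iInter_of_finite fun i => isOpen_iInter_of_finite fun j =>
    isOpen_iInter_of_finite fun _ => isOpen_ne_fun (continuous_apply i) (continuous_apply j)

theorem continuousOn_divDiff {m : ℕ} {I : Set ℝ} {g : ℝ → ℝ} (hg : ContinuousOn g I) :
    ContinuousOn (fun x => divDiff m x g)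
      ({x | Function.Injective x} ∩ Set.univ.pi fun _ => I) := by
  refine continuousOn_finsetSum _ fun i _ => ContinuousOn.div ?_ (by fun_prop) ?_
  · exact hg.comp (continuous_apply i).continuousOn fun x hx => hx.2 i trivial
  · exact fun x hx => prod_ne_zero_iff.2 fun j hj =>
      sub_ne_zero.2 (hx.1.ne (ne_of_mem_erase hj).symm)

theorem ConvexOrder.of_inter_dense {n : ℕ} {I D : Set ℝ} {g : ℝ → ℝ} (hI : IsOpen I)
    (hD : Dense D) (hg : ContinuousOn g I) (h : ConvexOrder n (I ∩ D) g) :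
    ConvexOrder n I g := by
  intro x hx hxI
  set T := {y : Fin (n + 2) → ℝ | Function.Injective y} ∩ Set.univ.pi fun _ => I
  have hT : IsOpen T := isOpen_setOf_injective.inter (isOpen_set_pi Set.finite_univ fun _ _ => hI)
  have hxT : x ∈ T := ⟨hx, fun i _ => hxI i⟩
  have hxcl : x ∈ closure (T ∩ Set.univ.pi fun _ => D) :=
    (dense_pi Set.univ fun _ _ => hD).open_subset_closure_inter hT hxT
  have hmem := ((continuousOn_divDiff hg).continuousWithinAt hxT).mono
    Set.inter_subset_left |>.mem_closure_image hxcl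
  refine closure_minimal ?_ isClosed_Ici hmem
  rintro _ ⟨y, ⟨⟨hy, hyI⟩, hyD⟩, rfl⟩
  exact h y hy fun i => ⟨hyI i trivial, hyD i trivial⟩

/-- An n-Jensen convex function agrees on the rationals of I with some continuous
n-convex function on I. -/
theorem jensen_convex_rational_extension (n : ℕ) (hn : 1 ≤ n) (I : Set ℝ)
    (hI : ProperOpenInterval I) (f : ℝ → ℝ) (hf : JensenConvexOrder n I f) :
    ∃ g : ℝ → ℝ, ContinuousOn g I ∧ ConvexOrder n I g ∧
      ∀ x ∈ I, IsRatR x → g x = f x := by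
  obtain ⟨hIo, hIc, -, -⟩ := hI
  have hQ : Dense (Set.range ((↑) : ℚ → ℝ)) := Rat.denseRange_cast
  have hfQ := hf.convexOrder_inter_range_ratCast hIc
  obtain ⟨g, hg, hgf⟩ := exists_continuousOn_eqOn_of_lipschitzOnWith
    (hQ.closure_eq ▸ Set.subset_univ I) fun x hx => hfQ.exists_lipschitzOnWith hIo hQ hn hx
  exact ⟨g, hg, (hfQ.congr hgf.symm).of_inter_dense hIo hQ hg, fun x hx hxQ => hgf ⟨hx, hxQ⟩⟩
end

section
/- Let n ∈ ℕ (n ≥ 1) and let I be a proper open subinterval of ℝ. If f : I → ℝ is Jensen convex of order n, then f satisfies the n-convexity inequality at all rational nodes: [x_0, x_1, …, x_n, x_{n+1}; f] ≥ 0 for all pairwise distinct rational points x_0, x_1, …, x_n, x_{n+1} ∈ I ∩ ℚ. -/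
open Finset

/-!
For nodes `a < t < b` with `a, b ∈ s` and `t ∉ s`, divided differences satisfy
`(b - a) [s; f] = (t - a) [s \ {b} ∪ {t}; f] + (b - t) [s \ {a} ∪ {t}; f]`,
so trading an endpoint for a missing interior node writes `[s; f]` as a positive combination of
divided differences over nodes of smaller spread. Rational nodes lie on a common grid `hℤ`, and
iterating the exchange inside it reduces `[s; f] ≥ 0` to `n + 2` consecutive grid nodes, where
`[s; f] = Δ_h^{n+1} f(x) / ((n + 1)! h^{n+1})` is nonnegative by Jensen convexity.
-/

lemma subset_Icc_of_notMem_left {T : Finset ℤ} {k : ℤ} {N : ℕ}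
    (hT : T ⊆ Icc k (k + (N + 1 : ℕ))) (hk : k ∉ T) : T ⊆ Icc (k + 1) (k + 1 + N) := by
  intro i hi
  have := mem_Icc.1 (hT hi)
  have : i ≠ k := fun h => hk (h ▸ hi)
  rw [mem_Icc]
  omega

lemma subset_Icc_of_notMem_right {T : Finset ℤ} {k : ℤ} {N : ℕ}
    (hT : T ⊆ Icc k (k + (N + 1 : ℕ))) (hk : k + (N + 1 : ℕ) ∉ T) : T ⊆ Icc k (k + N) := by
  intro i hi
  have := mem_Icc.1 (hT hi)
  have : i ≠ k + (N + 1 : ℕ) := fun h => hk (h ▸ hi)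
  rw [mem_Icc]
  omega

noncomputable def divDiffFinset (f : ℝ → ℝ) (s : Finset ℝ) : ℝ :=
  ∑ a ∈ s, f a / ∏ b ∈ s.erase a, (a - b)

section divDiffFinset

variable (f : ℝ → ℝ)

lemma divDiffFinset_singleton (a : ℝ) : divDiffFinset f {a} = f a := by
  simp [divDiffFinset]

lemma divDiffFinset_erase {s : Finset ℝ} {a : ℝ} (ha : a ∈ s) :
    divDiffFinset f (s.erase a) = ∑ c ∈ s, f c * (c - a) / ∏ b ∈ s.erase c, (c - b) := by
  rw [divDiffFinset, ← add_sum_erase _ _ ha, sub_self, mul_zero, zero_div, zero_add]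
  refine sum_congr rfl fun c hc => ?_
  have hca : c ≠ a := ne_of_mem_erase hc
  rw [erase_right_comm, ← mul_prod_erase (s.erase c) (fun b => c - b) (mem_erase.2 ⟨hca.symm, ha⟩),
    mul_comm (f c), mul_div_mul_left _ _ (sub_ne_zero.2 hca)]

lemma sub_mul_divDiffFinset {s : Finset ℝ} {a b : ℝ} (ha : a ∈ s) (hb : b ∈ s) :
    (b - a) * divDiffFinset f s = divDiffFinset f (s.erase a) - divDiffFinset f (s.erase b) := by
  rw [divDiffFinset_erase f ha, divDiffFinset_erase f hb, ← sum_sub_distrib, divDiffFinset,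
    mul_sum]
  refine sum_congr rfl fun c _ => ?_
  have : ∏ b ∈ s.erase c, (c - b) ≠ 0 :=
    prod_ne_zero_iff.2 fun b hb => sub_ne_zero.2 (ne_of_mem_erase hb).symm
  field_simp
  ring

lemma divDiffFinset_nonneg_of_exchange {s : Finset ℝ} {a b t : ℝ} (ha : a ∈ s) (hb : b ∈ s)
    (ht : t ∉ s) (hat : a < t) (htb : t < b)
    (hb' : 0 ≤ divDiffFinset f (insert t (s.erase b)))
    (ha' : 0 ≤ divDiffFinset f (insert t (s.erase a))) :
    0 ≤ divDiffFinset f s := by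
  have hrec_a := sub_mul_divDiffFinset f (mem_insert_of_mem ha) (mem_insert_self t s)
  have hrec_b := sub_mul_divDiffFinset f (mem_insert_of_mem hb) (mem_insert_self t s)
  rw [erase_insert ht, erase_insert_of_ne hat.ne'] at hrec_a
  rw [erase_insert ht, erase_insert_of_ne htb.ne] at hrec_b
  have hcomb : (b - a) * divDiffFinset f s =
      (t - a) * divDiffFinset f (insert t (s.erase b)) +
        (b - t) * divDiffFinset f (insert t (s.erase a)) := by
    linear_combination (t - a) * hrec_b - (t - b) * hrec_a
  refine nonneg_of_mul_nonneg_right ?_ (sub_pos.2 (hat.trans htb))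
  rw [hcomb]
  exact add_nonneg (mul_nonneg (sub_pos.2 hat).le hb') (mul_nonneg (sub_pos.2 htb).le ha')

lemma divDiffFinset_image_Icc_mul (h : ℝ) (hh : h ≠ 0) (m : ℕ) (k : ℤ) :
    divDiffFinset f ((Icc k (k + m)).image (fun i : ℤ => i * h)) =
      (dOp h)^[m] f (k * h) / (m.factorial * h ^ m) := by
  induction m generalizing k with
  | zero => simp [divDiffFinset_singleton]
  | succ m ih =>
    have hinj : Function.Injective (fun i : ℤ => (i : ℝ) * h) := fun i j hij => by
      simpa [hh] using hij
    have hk : k ∈ Icc k (k + (m + 1 : ℕ)) := mem_Icc.2 ⟨le_rfl, by omega⟩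
    have hkm : k + (m + 1 : ℕ) ∈ Icc k (k + (m + 1 : ℕ)) := mem_Icc.2 ⟨by omega, le_rfl⟩
    have hrec := sub_mul_divDiffFinset f (mem_image_of_mem (fun i : ℤ => (i : ℝ) * h) hk)
      (mem_image_of_mem (fun i : ℤ => (i : ℝ) * h) hkm)
    rw [← image_erase hinj, ← image_erase hinj, Icc_erase_left, Icc_erase_right,
      ← Icc_add_one_left_eq_Ioc, ← Icc_sub_one_right_eq_Ico] at hrec
    have hleft : Icc (k + 1) (k + (m + 1 : ℕ)) = Icc (k + 1) (k + 1 + m) := by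
      congr 1; push_cast; ring
    have hright : Icc k (k + (m + 1 : ℕ) - 1) = Icc k (k + m) := by
      congr 1; push_cast; ring
    rw [hleft, hright, ih, ih] at hrec
    rw [Function.iterate_succ_apply', Nat.factorial_succ]
    simp only [dOp] at hrec ⊢
    push_cast at hrec ⊢
    have hm : (m : ℝ) + 1 ≠ 0 := by positivity
    have hfac : (m.factorial : ℝ) ≠ 0 := by positivity
    rw [pow_succ]
    field_simp at hrec ⊢
    linear_combination hrec

variable {e : ℤ → ℝ} {m : ℕ} {lo hi : ℤ}

lemma divDiffFinset_image_nonneg_of_subset_Icc_add (he : StrictMono e)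
    (hcons : ∀ k, lo ≤ k → k + m + 1 ≤ hi → 0 ≤ divDiffFinset f ((Icc k (k + m + 1)).image e))
    (N : ℕ) {k : ℤ} (hlo : lo ≤ k)
    (hhi : k + N ≤ hi) {T : Finset ℤ} (hT : T ⊆ Icc k (k + N)) (hcard : T.card = m + 2) :
    0 ≤ divDiffFinset f (T.image e) := by
  induction N generalizing k T with
  | zero =>
    have := card_le_card hT
    simp only [Nat.cast_zero, add_zero, Icc_self, card_singleton] at this
    omega
  | succ N ih =>
    have ih_left := @ih (k + 1) (by omega) (by omega)
    have ih_right := @ih k hlo (by omega)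
    by_cases hk : k ∈ T
    swap; · exact ih_left (subset_Icc_of_notMem_left hT hk) hcard
    by_cases hkN : k + (N + 1 : ℕ) ∈ T
    swap; · exact ih_right (subset_Icc_of_notMem_right hT hkN) hcard
    by_cases hfull : T = Icc k (k + (N + 1 : ℕ))
    · have hN : N = m := by
        have := hfull ▸ hcard
        simp only [Int.card_Icc] at this
        omega
      rw [hfull, hN, Nat.cast_succ, ← add_assoc]
      exact hcons k hlo (by omega)
    obtain ⟨j, hjI, hjT⟩ := exists_of_ssubset (ssubset_of_subset_of_ne hT hfull)
    have hj := mem_Icc.1 hjI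
    have hkj : k < j := lt_of_le_of_ne hj.1 fun h => hjT (h ▸ hk)
    have hjN : j < k + (N + 1 : ℕ) := lt_of_le_of_ne hj.2 fun h => hjT (h ▸ hkN)
    have hexch : ∀ a ∈ T, insert j (T.erase a) ⊆ Icc k (k + (N + 1 : ℕ)) ∧
        a ∉ insert j (T.erase a) ∧ (insert j (T.erase a)).card = m + 2 := fun a ha =>
      ⟨insert_subset hjI ((erase_subset a T).trans hT),
        by simpa using fun h : a = j => hjT (h ▸ ha),
        by rw [card_insert_of_notMem fun h => hjT (mem_of_mem_erase h), card_erase_of_mem ha]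
           omega⟩
    refine divDiffFinset_nonneg_of_exchange f (mem_image_of_mem e hk) (mem_image_of_mem e hkN)
      (fun h => hjT (he.injective.mem_finset_image.1 h)) (he hkj) (he hjN) ?_ ?_
    all_goals rw [← image_erase he.injective, ← image_insert]
    · obtain ⟨hsub, hnot, hc⟩ := hexch _ hkN
      exact ih_right (subset_Icc_of_notMem_right hsub hnot) hc
    · obtain ⟨hsub, hnot, hc⟩ := hexch _ hk
      exact ih_left (subset_Icc_of_notMem_left hsub hnot) hc

lemma divDiffFinset_image_nonneg_of_subset_Icc (he : StrictMono e)
    (hcons : ∀ k, lo ≤ k → k + m + 1 ≤ hi → 0 ≤ divDiffFinset f ((Icc k (k + m + 1)).image e))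
    {T : Finset ℤ} (hT : T ⊆ Icc lo hi)
    (hcard : T.card = m + 2) : 0 ≤ divDiffFinset f (T.image e) := by
  obtain ⟨i, hi⟩ := card_pos.1 (hcard ▸ Nat.succ_pos _ : 0 < T.card)
  have := mem_Icc.1 (hT hi)
  obtain ⟨N, hN⟩ := Int.le.dest (this.1.trans this.2)
  exact divDiffFinset_image_nonneg_of_subset_Icc_add f he hcons N le_rfl hN.le (hN ▸ hT) hcard

end divDiffFinset

lemma divDiff_eq_divDiffFinset (m : ℕ) {x : Fin (m + 1) → ℝ} (hx : Function.Injective x)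
    (f : ℝ → ℝ) : divDiff m x f = divDiffFinset f (univ.image x) := by
  rw [divDiff, divDiffFinset, sum_image fun i _ j _ h => hx h]
  refine sum_congr rfl fun i _ => ?_
  rw [← image_erase hx, prod_image fun i _ j _ h => hx h]

lemma exists_pos_forall_eq_int_mul {ι : Type*} [Fintype ι] {x : ι → ℝ}
    (hx : ∀ i, IsRatR (x i)) : ∃ h : ℝ, 0 < h ∧ ∃ z : ι → ℤ, ∀ i, x i = z i * h := by
  choose q hq using hx
  set d : ℕ := ∏ i, (q i).den
  have hd : (0 : ℝ) < d := by positivity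
  choose c hc using fun i => dvd_prod_of_mem (fun i => (q i).den) (mem_univ i)
  refine ⟨1 / d, by positivity, fun i => (q i).num * c i, fun i => ?_⟩
  have hc' : (d : ℝ) = (q i).den * c i := by exact_mod_cast hc i
  have hc0 : (c i : ℝ) ≠ 0 := right_ne_zero_of_mul (hc' ▸ hd.ne')
  rw [← hq, Field.ratCast_def, hc']
  push_cast
  field_simp

theorem jensen_convex_rational_nodes_general (n : ℕ) (I : Set ℝ)
    (hI : ProperOpenInterval I) (f : ℝ → ℝ) (hf : JensenConvexOrder n I f) :
    ∀ x : Fin (n + 2) → ℝ, Function.Injective x → (∀ i, x i ∈ I) →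
      (∀ i, IsRatR (x i)) → 0 ≤ divDiff (n + 1) x f := by
  intro x hx hxI hxQ
  obtain ⟨h, hh, z, hxz⟩ := exists_pos_forall_eq_int_mul hxQ
  obtain rfl : x = (fun k : ℤ => (k : ℝ) * h) ∘ z := funext hxz
  have hz : Function.Injective z := hx.of_comp
  have he : StrictMono fun k : ℤ => (k : ℝ) * h := fun a b hab =>
    mul_lt_mul_of_pos_right (Int.cast_lt.2 hab) hh
  obtain ⟨i₀, -, hmin⟩ := exists_min_image univ z univ_nonempty
  obtain ⟨i₁, -, hmax⟩ := exists_max_image univ z univ_nonempty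
  have hgrid : ∀ k : ℤ, z i₀ ≤ k → k ≤ z i₁ → (k : ℝ) * h ∈ I := fun k h₀ h₁ =>
    hI.2.1.out (hxI i₀) (hxI i₁) ⟨he.monotone h₀, he.monotone h₁⟩
  rw [divDiff_eq_divDiffFinset _ hx, ← image_image]
  refine divDiffFinset_image_nonneg_of_subset_Icc f he (lo := z i₀) (hi := z i₁)
    (fun k h₀ h₁ => ?_) (fun k hk => ?_)
    (by rw [card_image_of_injective _ hz, card_univ, Fintype.card_fin])
  · have hwindow : k + n + 1 = k + (n + 1 : ℕ) := by push_cast; ring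
    rw [hwindow, divDiffFinset_image_Icc_mul f h hh.ne']
    refine div_nonneg (hf h hh _ (hgrid k h₀ (by omega)) ?_) (by positivity)
    convert hgrid (k + n + 1) (by omega) h₁ using 1
    push_cast; ring
  · obtain ⟨i, -, rfl⟩ := mem_image.1 hk
    exact mem_Icc.2 ⟨hmin i (mem_univ i), hmax i (mem_univ i)⟩

/-- An n-Jensen convex function satisfies the n-convexity inequality at rational nodes. -/
theorem jensen_convex_rational_nodes (n : ℕ) (hn : 1 ≤ n) (I : Set ℝ)
    (hI : ProperOpenInterval I) (f : ℝ → ℝ) (hf : JensenConvexOrder n I f) :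
    ∀ x : Fin (n + 2) → ℝ, Function.Injective x → (∀ i, x i ∈ I) →
      (∀ i, IsRatR (x i)) → 0 ≤ divDiff (n + 1) x f :=
  jensen_convex_rational_nodes_general n I hI f hf
end

section
/- Let n ∈ ℕ (n ≥ 1) and let I be a proper open subinterval of ℝ. Suppose f : I → ℝ is Wright convex of order n, g : I → ℝ is continuous, and f(x) = g(x) for every rational x ∈ I. Then Δ_{h_1}⋯Δ_{h_n} f(x) = Δ_{h_1}⋯Δ_{h_n} g(x) for all positive rational numbers h_1, …, h_n ∈ ℚ, h_i > 0, and all (not necessarily rational) x ∈ I ∩ (I − (h_1 + ⋯ + h_n)). -/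
open Finset

lemma dList_nil (f : ℝ → ℝ) : dList [] f = f := rfl

lemma dList_cons (h : ℝ) (t : List ℝ) (f : ℝ → ℝ) (x : ℝ) :
    dList (h :: t) f x = dList t f (x + h) - dList t f x := rfl

lemma IsRatR.add {x y : ℝ} (hx : IsRatR x) (hy : IsRatR y) : IsRatR (x + y) := by
  obtain ⟨q, rfl⟩ := hx; obtain ⟨r, rfl⟩ := hy
  exact ⟨q + r, by push_cast; ring⟩

/-- Agreement lemma: if `f = g` on rationals of `[x, x + l.sum]`, `x` and entries rational. -/
lemma dList_agree (f g : ℝ → ℝ) :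
    ∀ (l : List ℝ), (∀ h ∈ l, 0 ≤ h ∧ IsRatR h) → ∀ x : ℝ, IsRatR x →
      (∀ y : ℝ, x ≤ y → y ≤ x + l.sum → IsRatR y → f y = g y) →
      dList l f x = dList l g x := by
  intro l
  induction l with
  | nil =>
    intro _ x hx hagree
    simpa [dList_nil] using hagree x le_rfl (by simp) hx
  | cons h t ih =>
    intro hl x hx hagree
    have hh := hl h (by simp)
    have ht : ∀ a ∈ t, 0 ≤ a ∧ IsRatR a := fun a ha => hl a (by simp [ha])
    have htsum : 0 ≤ t.sum := List.sum_nonneg (fun a ha => (ht a ha).1)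
    rw [dList_cons, dList_cons]
    have h1 : dList t f (x + h) = dList t g (x + h) := by
      refine ih ht (x + h) (hx.add hh.2) (fun y hy1 hy2 hyr => ?_)
      refine hagree y (le_trans (by linarith [hh.1]) hy1) ?_ hyr
      simp only [List.sum_cons]; linarith
    have h2 : dList t f x = dList t g x := by
      refine ih ht x hx (fun y hy1 hy2 hyr => ?_)
      refine hagree y hy1 ?_ hyr
      simp only [List.sum_cons]; linarith [hh.1]
    rw [h1, h2]

/-- Continuity of the iterated difference of a continuous function. -/
lemma dList_continuousOn (I : Set ℝ) (hord : I.OrdConnected) (g : ℝ → ℝ)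
    (hg : ContinuousOn g I) :
    ∀ (l : List ℝ), (∀ h ∈ l, 0 ≤ h) →
      ContinuousOn (dList l g) {z | z ∈ I ∧ z + l.sum ∈ I} := by
  intro l
  induction l with
  | nil =>
    intro _
    refine (hg.mono ?_)
    intro z hz; exact hz.1
  | cons h t ih =>
    intro hl
    have hh : 0 ≤ h := hl h (by simp)
    have ht : ∀ a ∈ t, 0 ≤ a := fun a ha => hl a (by simp [ha])
    have htsum : 0 ≤ t.sum := List.sum_nonneg ht
    have hA : ContinuousOn (fun z => dList t g (z + h)) {z | z ∈ I ∧ z + (h :: t).sum ∈ I} := by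
      refine (ih ht).comp (by fun_prop) ?_
      intro z hz
      obtain ⟨hz1, hz2⟩ := hz
      simp only [List.sum_cons] at hz2
      dsimp only
      constructor
      · exact hord.out hz1 hz2 ⟨by linarith, by linarith⟩
      · exact hord.out hz1 hz2 ⟨by linarith, by linarith⟩
    have hB : ContinuousOn (fun z => dList t g z) {z | z ∈ I ∧ z + (h :: t).sum ∈ I} := by
      refine (ih ht).mono ?_
      intro z hz
      obtain ⟨hz1, hz2⟩ := hz
      simp only [List.sum_cons] at hz2
      exact ⟨hz1, hord.out hz1 hz2 ⟨by linarith, by linarith⟩⟩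
    exact hA.sub hB

/-- If f is n-Wright convex, g is continuous and agrees with f on the rationals of I,
then the n-fold differences of f and g with positive rational increments agree
everywhere on their domain. -/
theorem iterated_difference_agree_rational_increments (n : ℕ) (hn : 1 ≤ n) (I : Set ℝ)
    (hI : ProperOpenInterval I) (f g : ℝ → ℝ) (hf : WrightConvexOrder n I f)
    (hg : ContinuousOn g I) (hfg : ∀ x ∈ I, IsRatR x → f x = g x) :
    ∀ l : List ℝ, l.length = n → (∀ h ∈ l, 0 < h ∧ IsRatR h) →
      ∀ x : ℝ, x ∈ I → x + l.sum ∈ I → dList l f x = dList l g x := by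
  obtain ⟨hIopen, hIord, -, -⟩ := hI
  intro l hlen hl x hxI hxsI
  set s := l.sum with hs
  have hs0 : 0 ≤ s := List.sum_nonneg (fun a ha => (hl a ha).1.le)
  -- the natural domain J of the iterated difference
  set J : Set ℝ := I ∩ (fun z => z + s) ⁻¹' I with hJ
  have hJopen : IsOpen J := hIopen.inter (hIopen.preimage (by fun_prop))
  have hxJ : x ∈ J := ⟨hxI, hxsI⟩
  -- monotonicity of the iterated difference of f on J
  have hmono : ∀ a b : ℝ, a ∈ J → b ∈ J → a ≤ b → dList l f a ≤ dList l f b := by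
    intro a b haJ hbJ hab
    rcases eq_or_lt_of_le hab with rfl | hab
    · exact le_rfl
    · have hpos : ∀ h ∈ (b - a) :: l, 0 < h := by
        intro h hh
        rcases List.mem_cons.mp hh with rfl | hh
        · linarith
        · exact (hl h hh).1
      have hdom : a + ((b - a) :: l).sum ∈ I := by
        have : a + ((b - a) :: l).sum = b + s := by simp [hs]; ring
        rw [this]; exact hbJ.2
      have key := hf ((b - a) :: l) (by simp [hlen]) hpos a haJ.1 hdom
      rw [dList_cons] at key
      have hab' : a + (b - a) = b := by ring
      rw [hab'] at key
      linarith
  -- agreement of the two differences at rational points of J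
  have hrat : ∀ q : ℝ, q ∈ J → IsRatR q → dList l f q = dList l g q := by
    intro q hqJ hq
    refine dList_agree f g l (fun h hh => ⟨(hl h hh).1.le, (hl h hh).2⟩) q hq ?_
    intro y hy1 hy2 hyr
    have hyI : y ∈ I := hIord.out hqJ.1 hqJ.2 ⟨hy1, hy2⟩
    exact hfg y hyI hyr
  -- continuity of the iterated difference of g at x
  have hcont : ContinuousAt (dList l g) x := by
    have h1 : ContinuousOn (dList l g) {z | z ∈ I ∧ z + s ∈ I} :=
      dList_continuousOn I hIord g hg l (fun h hh => (hl h hh).1.le)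
    have hJeq : J = {z | z ∈ I ∧ z + s ∈ I} := by ext z; simp [hJ]
    exact (h1.mono (le_of_eq hJeq)).continuousAt (hJopen.mem_nhds hxJ)
  -- squeeze
  obtain ⟨δ₀, hδ₀, hball⟩ := Metric.isOpen_iff.mp hJopen x hxJ
  apply le_antisymm
  · refine le_of_forall_pos_le_add (fun ε hε => ?_)
    obtain ⟨δ₁, hδ₁, hδ⟩ := Metric.continuousAt_iff.mp hcont ε hε
    obtain ⟨q, hq1, hq2⟩ := exists_rat_btwn (lt_add_of_pos_right x (lt_min hδ₀ hδ₁))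
    have hlt := lt_min_iff.mp (show (q:ℝ) - x < min δ₀ δ₁ by linarith)
    have hqJ : (q : ℝ) ∈ J := by
      apply hball
      rw [Metric.mem_ball, Real.dist_eq, abs_sub_lt_iff]
      exact ⟨hlt.1, by linarith [hlt.1]⟩
    have hqd : dist (q : ℝ) x < δ₁ := by
      rw [Real.dist_eq, abs_sub_lt_iff]
      exact ⟨hlt.2, by linarith [hlt.2]⟩
    have h1 : dList l f x ≤ dList l f q := hmono x q hxJ hqJ hq1.le
    have h2 : dList l f q = dList l g q := hrat q hqJ ⟨q, rfl⟩
    have h3 : |dList l g q - dList l g x| < ε := by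
      have := hδ hqd; rwa [Real.dist_eq] at this
    have := abs_sub_lt_iff.mp h3
    linarith [this.1]
  · refine le_of_forall_pos_le_add (fun ε hε => ?_)
    obtain ⟨δ₁, hδ₁, hδ⟩ := Metric.continuousAt_iff.mp hcont ε hε
    obtain ⟨q, hq1, hq2⟩ := exists_rat_btwn (sub_lt_self x (lt_min hδ₀ hδ₁))
    have hlt := lt_min_iff.mp (show x - (q:ℝ) < min δ₀ δ₁ by linarith)
    have hqJ : (q : ℝ) ∈ J := by
      apply hball
      rw [Metric.mem_ball, Real.dist_eq, abs_sub_lt_iff]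
      exact ⟨by linarith [hlt.1], hlt.1⟩
    have hqd : dist (q : ℝ) x < δ₁ := by
      rw [Real.dist_eq, abs_sub_lt_iff]
      exact ⟨by linarith [hlt.2], hlt.2⟩
    have h1 : dList l f q ≤ dList l f x := hmono q x hqJ hxJ hq2.le
    have h2 : dList l f q = dList l g q := hrat q hqJ ⟨q, rfl⟩
    have h3 : |dList l g q - dList l g x| < ε := by
      have := hδ hqd; rwa [Real.dist_eq] at this
    have := abs_sub_lt_iff.mp h3
    linarith [this.2]
end

section
/- Let n ∈ ℕ (n ≥ 1) and let I be a proper open subinterval of ℝ. Suppose f : I → ℝ is Wright convex of order n, g : I → ℝ is continuous, and f(x) = g(x) for every rational x ∈ I. Then the difference f − g satisfies the Fréchet functional equation of order n on I: Δ_h^{n+1}(f − g)(x) = 0 for all h > 0 and all x ∈ I ∩ (I − (n+1)h). -/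
open Finset

/-!
Induction on `n`, proving `Δ_{h_1}⋯Δ_{h_{n+1}}(f − g) = 0` for arbitrary positive steps.
Write `l = h :: l'`, `Φ = Δ_{l'}(f − g)` and `ψ = Δ_{l'} g`. Wright convexity makes
`Φ + ψ = Δ_{l'} f` nondecreasing, and `ψ` is continuous. For rational `r > 0`, the pair
`Δ_r f`, `Δ_r g` satisfies the hypotheses of order `n − 1` on `I ∩ (I − r)`, so by induction
`Φ(x + r) = Φ(x)`. Squeezing `x + h` between rational shifts `x + r` from both sides then gives
`Φ(x + h) = Φ(x)`. For `n = 0` the same squeeze, anchored at rational points where `f − g`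
vanishes, shows `f = g` on `I`.
-/

open Filter Topology Set

lemma dOp_comm (a b : ℝ) (f : ℝ → ℝ) : dOp a (dOp b f) = dOp b (dOp a f) := by
  funext x; simp only [dOp, add_right_comm x b a]; ring

lemma dOp_sub (r : ℝ) (f g : ℝ → ℝ) :
    dOp r (fun y => f y - g y) = fun y => dOp r f y - dOp r g y := by
  funext x; simp only [dOp]; ring

lemma dList_cons_s13 (a : ℝ) (l : List ℝ) (f : ℝ → ℝ) : dList (a :: l) f = dOp a (dList l f) :=
  rfl

lemma dList_dOp (l : List ℝ) (a : ℝ) (f : ℝ → ℝ) : dList l (dOp a f) = dOp a (dList l f) := by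
  induction l with
  | nil => rfl
  | cons b l ih => rw [dList_cons_s13, dList_cons_s13, ih, dOp_comm]

lemma dList_append_singleton (l : List ℝ) (a : ℝ) (f : ℝ → ℝ) :
    dList (l ++ [a]) f = dList l (dOp a f) := by
  simp only [dList, List.foldr_append]; rfl

lemma dList_sub (l : List ℝ) (f g : ℝ → ℝ) :
    dList l (fun y => f y - g y) = fun y => dList l f y - dList l g y := by
  induction l with
  | nil => rfl
  | cons a l ih => rw [dList_cons_s13, ih, dOp_sub]; rfl

lemma dOp_iterate (h : ℝ) (k : ℕ) (f : ℝ → ℝ) :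
    (dOp h)^[k] f = dList (List.replicate k h) f := by
  induction k with
  | zero => rfl
  | succ k ih => rw [Function.iterate_succ_apply', ih]; rfl

lemma continuousAt_dList {g : ℝ → ℝ} {l : List ℝ} (hl : ∀ h ∈ l, 0 ≤ h) {z : ℝ}
    (hg : ∀ w ∈ Icc z (z + l.sum), ContinuousAt g w) : ContinuousAt (dList l g) z := by
  induction l generalizing z with
  | nil => exact hg z (by simp)
  | cons a l ih =>
    rw [List.forall_mem_cons] at hl
    obtain ⟨ha, hl⟩ := hl
    have hsum : 0 ≤ l.sum := List.sum_nonneg hl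
    rw [List.sum_cons] at hg
    have hshift : ContinuousAt (dList l g) (z + a) :=
      ih hl fun w hw => hg w ⟨by linarith [hw.1], by linarith [hw.2]⟩
    have hbase : ContinuousAt (dList l g) z :=
      ih hl fun w hw => hg w ⟨hw.1, by linarith [hw.2]⟩
    show ContinuousAt (fun x => dList l g (x + a) - dList l g x) z
    exact (hshift.comp_of_eq (continuous_add_const a).continuousAt rfl).sub hbase

lemma frequently_nhdsLT_rat_add {a b : ℝ} (hab : a < b) :
    ∃ᶠ d in 𝓝[<] b, ∃ q : ℚ, 0 < q ∧ a + q = d := by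
  rw [(nhdsLT_basis b).frequently_iff]
  intro l hl
  obtain ⟨q, hq, hqb⟩ := exists_rat_btwn (max_lt (sub_lt_sub_right hl a) (sub_pos.2 hab))
  rw [max_lt_iff] at hq
  exact ⟨a + q, ⟨by linarith, by linarith⟩, q, by exact_mod_cast hq.2, rfl⟩

lemma frequently_nhdsGT_rat_add {a b : ℝ} (hab : a < b) :
    ∃ᶠ d in 𝓝[>] b, ∃ q : ℚ, 0 < q ∧ a + q = d := by
  rw [(nhdsGT_basis b).frequently_iff]
  intro u hu
  obtain ⟨q, hbq, hqu⟩ := exists_rat_btwn (sub_lt_sub_right hu a)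
  exact ⟨a + q, ⟨by linarith, by linarith⟩, q, by exact_mod_cast (by linarith : (0 : ℝ) < q), rfl⟩

lemma eq_of_monotoneOn_add_of_rat_add {S : Set ℝ} {Φ ψ : ℝ → ℝ} {a b c : ℝ} (hab : a < b)
    (hS : S ∈ 𝓝 b) (hmono : MonotoneOn (Φ + ψ) S) (hψ : ContinuousAt ψ b)
    (hrat : ∀ q : ℚ, 0 < q → a + q ∈ S → Φ (a + q) = c) : Φ b = c := by
  have hb : b ∈ S := mem_of_mem_nhds hS
  have hlim : Tendsto (fun d => c + ψ d) (𝓝 b) (𝓝 (c + ψ b)) := hψ.const_add c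
  have hle : c + ψ b ≤ Φ b + ψ b := by
    refine le_of_tendsto_of_frequently (hlim.mono_left (nhdsWithin_le_nhds (s := Iio b))) ?_
    refine ((frequently_nhdsLT_rat_add hab).and_eventually (inter_mem_nhdsWithin _ hS)).mono ?_
    rintro _ ⟨⟨q, hq, rfl⟩, hdb, hdS⟩
    simpa [hrat q hq hdS] using hmono hdS hb (le_of_lt hdb)
  have hge : Φ b + ψ b ≤ c + ψ b := by
    refine ge_of_tendsto_of_frequently (hlim.mono_left (nhdsWithin_le_nhds (s := Ioi b))) ?_
    refine ((frequently_nhdsGT_rat_add hab).and_eventually (inter_mem_nhdsWithin _ hS)).mono ?_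
    rintro _ ⟨⟨q, hq, rfl⟩, hbd, hdS⟩
    simpa [hrat q hq hdS] using hmono hb hdS (le_of_lt hbd)
  linarith

namespace WrightConvexOrder

variable {n : ℕ} {I : Set ℝ} {f : ℝ → ℝ}

lemma monotoneOn_dList (hf : WrightConvexOrder n I f) {l : List ℝ} (hlen : l.length = n)
    (hl : ∀ h ∈ l, 0 < h) : MonotoneOn (dList l f) {w | w ∈ I ∧ w + l.sum ∈ I} := by
  rintro y ⟨hy, -⟩ z ⟨-, hz⟩ hyz
  rcases hyz.eq_or_lt with rfl | hlt
  · rfl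
  have hstep := hf ((z - y) :: l) (by simp [hlen]) (List.forall_mem_cons.2 ⟨sub_pos.2 hlt, hl⟩)
    y hy (by rwa [List.sum_cons, ← add_assoc, add_sub_cancel])
  simpa [dList_cons_s13, dOp] using hstep

lemma dOp_of_succ (hf : WrightConvexOrder (n + 1) I f) {r : ℝ} (hr : 0 < r) :
    WrightConvexOrder n (I ∩ (· + r) ⁻¹' I) (dOp r f) := by
  intro l hlen hl x hx hxl
  rw [← dList_append_singleton]
  refine hf (l ++ [r]) (by simp [hlen]) ?_ x hx.1 ?_
  · simpa [or_imp, forall_and, hr] using hl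
  · simpa [add_assoc] using hxl.2

end WrightConvexOrder

lemma ContinuousOn.dOp {I : Set ℝ} {g : ℝ → ℝ} (hg : ContinuousOn g I) (r : ℝ) :
    ContinuousOn (dOp r g) (I ∩ (· + r) ⁻¹' I) :=
  (hg.comp (continuous_add_const r).continuousOn fun _ hw => hw.2).sub
    (hg.mono inter_subset_left)

lemma dOp_eq_dOp_of_rat {I : Set ℝ} {f g : ℝ → ℝ} (hfg : ∀ x ∈ I, IsRatR x → f x = g x)
    {r : ℝ} (hr : IsRatR r) : ∀ x ∈ I ∩ (· + r) ⁻¹' I, IsRatR x → dOp r f x = dOp r g x := by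
  rintro _ ⟨hx, hxr⟩ ⟨p, rfl⟩
  obtain ⟨q, rfl⟩ := hr
  simp only [dOp]
  rw [hfg _ hx ⟨p, rfl⟩, hfg _ hxr ⟨p + q, by push_cast; rfl⟩]

lemma WrightConvexOrder.eqOn_of_zero {I : Set ℝ} (hIo : IsOpen I) {f g : ℝ → ℝ}
    (hf : WrightConvexOrder 0 I f) (hg : ContinuousOn g I)
    (hfg : ∀ x ∈ I, IsRatR x → f x = g x) : EqOn f g I := by
  intro b hb
  obtain ⟨a, hab⟩ := exists_rat_lt b
  have hΦψ : (fun y => f y - g y) + g = f := by funext; simp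
  refine sub_eq_zero.1 (eq_of_monotoneOn_add_of_rat_add (Φ := fun y => f y - g y) (c := 0) hab
    (hIo.mem_nhds hb) ?_ (hg.continuousAt (hIo.mem_nhds hb))
    fun q _ hq => sub_eq_zero.2 (hfg _ hq ⟨a + q, by push_cast; rfl⟩))
  rw [hΦψ]
  exact (hf.monotoneOn_dList (l := []) rfl (by simp)).mono fun w hw => ⟨hw, by simpa using hw⟩

theorem WrightConvexOrder.dList_sub_eq_zero {n : ℕ} {I : Set ℝ} (hIo : IsOpen I)
    (hI : I.OrdConnected) {f g : ℝ → ℝ} (hf : WrightConvexOrder n I f)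
    (hg : ContinuousOn g I) (hfg : ∀ x ∈ I, IsRatR x → f x = g x) {l : List ℝ}
    (hlen : l.length = n + 1) (hl : ∀ h ∈ l, 0 < h) {x : ℝ} (hx : x ∈ I) (hxl : x + l.sum ∈ I) :
    dList l (fun y => f y - g y) x = 0 := by
  induction n generalizing I f g l x with
  | zero =>
    obtain ⟨h, rfl⟩ := List.length_eq_one_iff.1 hlen
    have hfg' := hf.eqOn_of_zero hIo hg hfg
    simp only [List.sum_cons, List.sum_nil, add_zero] at hxl
    simp [dList, dOp, hfg' hx, hfg' hxl]
  | succ n ih =>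
    obtain ⟨h, l, rfl⟩ := List.exists_cons_of_length_eq_add_one hlen
    rw [List.length_cons, add_left_inj] at hlen
    obtain ⟨hh, hl⟩ := List.forall_mem_cons.1 hl
    rw [List.sum_cons] at hxl
    have hsum : 0 ≤ l.sum := List.sum_nonneg fun _ hk => (hl _ hk).le
    have hmem : Icc x (x + (h + l.sum)) ⊆ I := hI.out hx hxl
    set Φ := dList l (fun y => f y - g y)
    have hS : {w | w ∈ I ∧ w + l.sum ∈ I} ∈ 𝓝 (x + h) :=
      (hIo.inter (hIo.preimage (continuous_add_const _))).mem_nhds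
        ⟨hmem ⟨by linarith, by linarith⟩, show x + h + l.sum ∈ I by rwa [add_assoc]⟩
    show Φ (x + h) - Φ x = 0
    refine sub_eq_zero.2 (eq_of_monotoneOn_add_of_rat_add (ψ := dList l g)
      (lt_add_of_pos_right x hh) hS ?_ ?_ ?_)
    · have hΦψ : Φ + dList l g = dList l f := by funext; simp [Φ, dList_sub]
      exact hΦψ ▸ hf.monotoneOn_dList hlen hl
    · exact continuousAt_dList (fun _ hk => (hl _ hk).le) fun w hw =>
        hg.continuousAt (hIo.mem_nhds (hmem ⟨by linarith [hw.1], by linarith [hw.2]⟩))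
    · rintro q hq ⟨hxq, hxqS⟩
      have hr : (0 : ℝ) < q := by exact_mod_cast hq
      have hIr : (I ∩ (· + (q : ℝ)) ⁻¹' I).OrdConnected :=
        hI.inter (hI.preimage_mono fun _ _ hab => add_le_add_left hab _)
      have hshift := ih (hIo.inter (hIo.preimage (continuous_add_const _))) hIr
        (hf.dOp_of_succ hr) (hg.dOp q) (dOp_eq_dOp_of_rat hfg ⟨q, rfl⟩) hlen hl ⟨hx, hxq⟩
        ⟨hI.out hx hxqS ⟨by linarith, by linarith⟩,
          show x + l.sum + q ∈ I by rwa [add_right_comm]⟩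
      rw [← dOp_sub, dList_dOp] at hshift
      exact sub_eq_zero.1 hshift

theorem difference_satisfies_frechet_general (n : ℕ) (I : Set ℝ)
    (hI : ProperOpenInterval I) (f g : ℝ → ℝ) (hf : WrightConvexOrder n I f)
    (hg : ContinuousOn g I) (hfg : ∀ x ∈ I, IsRatR x → f x = g x) :
    ∀ h : ℝ, 0 < h → ∀ x : ℝ, x ∈ I → x + (n + 1) * h ∈ I →
      (dOp h)^[n + 1] (fun y => f y - g y) x = 0 := by
  intro h hh x hx hxh
  rw [dOp_iterate]
  refine hf.dList_sub_eq_zero hI.1 hI.2.1 hg hfg (by simp) (fun _ hk => ?_) hx ?_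
  · rwa [List.eq_of_mem_replicate hk]
  · simpa [List.sum_replicate] using hxh

/-- If f is n-Wright convex, g is continuous and agrees with f on the rationals of I,
then f − g satisfies the Fréchet functional equation of order n on I. -/
theorem difference_satisfies_frechet (n : ℕ) (hn : 1 ≤ n) (I : Set ℝ)
    (hI : ProperOpenInterval I) (f g : ℝ → ℝ) (hf : WrightConvexOrder n I f)
    (hg : ContinuousOn g I) (hfg : ∀ x ∈ I, IsRatR x → f x = g x) :
    ∀ h : ℝ, 0 < h → ∀ x : ℝ, x ∈ I → x + (n + 1) * h ∈ I →
      (dOp h)^[n + 1] (fun y => f y - g y) x = 0 :=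
  difference_satisfies_frechet_general n I hI f g hf hg hfg
end

section
/- Let I be a proper open subinterval of ℝ. If f : I → ℝ is Wright convex of order 1, i.e., f(tx+(1−t)y) + f((1−t)x+ty) ≤ f(x) + f(y) for all x, y ∈ I and t ∈ [0,1], then there exist a convex function g : I → ℝ and an additive function a : ℝ → ℝ (a(x+y) = a(x) + a(y) for all x, y ∈ ℝ) such that f(x) = g(x) + a(x) for all x ∈ I. -/
open Finset

/-! The dyadic difference quotients `2ⁿ (f (x + h / 2ⁿ) - f x)` of a midpoint convex function
decrease in `n`; on an open interval they converge to a limit `D x h`. For a Wright convex `f` the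
intervals `(-D x (-1), D x 1)` are pairwise disjoint as `x` varies, so they cannot all contain a
rational: `D p 1 + D p (-1) ≤ 0` at some `p`. Scaling `h` by powers of two and the monotonicity of
`h ↦ D p h + D p (-h)` on `[0, ∞)` then make `D p` odd, and Wright convexity makes it
superadditive on pairs of the same sign, hence additive. Finally `f - D p` is Wright convex with a
minimum at `p`, so it increases away from `p`, and a midpoint convex function with this property is
convex: approximate the weights by dyadic ones from the side where the function only grows. -/

open Filter Topology

section

theorem mem_uIcc_of_mul_nonneg {a b c : ℝ} (h : 0 ≤ (b - a) * (c - b)) : b ∈ Set.uIcc a c := by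
  rw [Set.mem_uIcc]
  rcases lt_trichotomy a b with hab | rfl | hab
  · exact Or.inl ⟨hab.le, by nlinarith⟩
  · exact (le_total a c).imp (fun h => ⟨le_rfl, h⟩) (fun h => ⟨h, le_rfl⟩)
  · exact Or.inr ⟨by nlinarith, hab.le⟩

theorem Real.exists_le_of_forall_lt_le {c d : ℝ} (hcd : c < d) {a b : ℝ → ℝ}
    (hab : ∀ x ∈ Set.Ioo c d, ∀ y ∈ Set.Ioo c d, x < y → b x ≤ a y) :
    ∃ x ∈ Set.Ioo c d, b x ≤ a x := by
  by_contra! hlt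
  choose! q hq using fun x hx => exists_rat_btwn (hlt x hx)
  have hmono : StrictMonoOn q (Set.Ioo c d) := fun x hx y hy hxy => by
    have := (hq x hx).2.trans ((hab x hx y hy hxy).trans_lt (hq y hy).1)
    exact_mod_cast this
  have := (Set.mapsTo_univ q _).countable_of_injOn hmono.injOn Set.countable_univ
  exact hcd.not_ge (Cardinal.Real.Ioo_countable_iff.1 this)

def WrightConvexOn (I : Set ℝ) (f : ℝ → ℝ) : Prop :=
  ∀ x ∈ I, ∀ y ∈ I, ∀ t ∈ Set.Icc (0 : ℝ) 1,
    f (t * x + (1 - t) * y) + f ((1 - t) * x + t * y) ≤ f x + f y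

def MidpointConvexOn (I : Set ℝ) (f : ℝ → ℝ) : Prop :=
  ∀ x ∈ I, ∀ y ∈ I, f ((x + y) / 2) ≤ (f x + f y) / 2

def convexWeights (I : Set ℝ) (f : ℝ → ℝ) : Set ℝ :=
  {t | t ∈ Set.Icc 0 1 ∧ ∀ x ∈ I, ∀ y ∈ I, f (t * x + (1 - t) * y) ≤ t * f x + (1 - t) * f y}

variable {I : Set ℝ} {f : ℝ → ℝ}

theorem zero_mem_convexWeights : 0 ∈ convexWeights I f :=
  ⟨Set.left_mem_Icc.2 zero_le_one, fun x _ y _ => by simp⟩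

theorem one_mem_convexWeights : 1 ∈ convexWeights I f :=
  ⟨Set.right_mem_Icc.2 zero_le_one, fun x _ y _ => by simp⟩

namespace MidpointConvexOn

theorem add_div_two_mem_convexWeights (hf : MidpointConvexOn I f) (hI : Convex ℝ I) {s t : ℝ}
    (hs : s ∈ convexWeights I f) (ht : t ∈ convexWeights I f) :
    (s + t) / 2 ∈ convexWeights I f := by
  obtain ⟨⟨hs0, hs1⟩, hsf⟩ := hs
  obtain ⟨⟨ht0, ht1⟩, htf⟩ := ht
  refine ⟨⟨by linarith, by linarith⟩, fun x hx y hy => ?_⟩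
  have hmem : ∀ r ∈ Set.Icc (0 : ℝ) 1, r * x + (1 - r) * y ∈ I := fun r hr =>
    hI hx hy hr.1 (sub_nonneg.2 hr.2) (add_sub_cancel r 1)
  have := hf _ (hmem s ⟨hs0, hs1⟩) _ (hmem t ⟨ht0, ht1⟩)
  rw [show (s * x + (1 - s) * y + (t * x + (1 - t) * y)) / 2
    = (s + t) / 2 * x + (1 - (s + t) / 2) * y by ring] at this
  linarith [hsf x hx y hy, htf x hx y hy]

theorem div_two_pow_mem_convexWeights (hf : MidpointConvexOn I f) (hI : Convex ℝ I) (n : ℕ)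
    {k : ℕ} (hk : k ≤ 2 ^ n) : (k : ℝ) / 2 ^ n ∈ convexWeights I f := by
  induction n generalizing k with
  | zero =>
    obtain rfl | rfl : k = 0 ∨ k = 1 := by omega
    · simpa using zero_mem_convexWeights
    · simpa using one_mem_convexWeights
  | succ n ih =>
    rcases le_or_gt k (2 ^ n) with hkn | hkn
    · convert hf.add_div_two_mem_convexWeights hI (ih hkn) zero_mem_convexWeights using 1
      rw [pow_succ]; ring
    · obtain ⟨j, rfl⟩ := Nat.exists_eq_add_of_le hkn.le
      have hj : j ≤ 2 ^ n := by rw [pow_succ] at hk; omega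
      convert hf.add_div_two_mem_convexWeights hI one_mem_convexWeights (ih hj) using 1
      push_cast [pow_succ]; field_simp

theorem le_of_forall_le_segment (hf : MidpointConvexOn I f) (hI : Convex ℝ I) {x y t : ℝ}
    (hx : x ∈ I) (hy : y ∈ I) (ht : t ∈ Set.Icc (0 : ℝ) 1)
    (hle : ∀ s ∈ Set.Icc 0 t, f (t * x + (1 - t) * y) ≤ f (s * x + (1 - s) * y)) :
    f (t * x + (1 - t) * y) ≤ t * f x + (1 - t) * f y := by
  set s : ℕ → ℝ := fun n => ⌊t * 2 ^ n⌋₊ / 2 ^ n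
  have hs_tendsto : Tendsto s atTop (𝓝 t) :=
    (tendsto_nat_floor_mul_div_atTop ht.1).comp (tendsto_pow_atTop_atTop_of_one_lt one_lt_two)
  have hs_mem : ∀ n, s n ∈ convexWeights I f := fun n =>
    hf.div_two_pow_mem_convexWeights hI n <| Nat.floor_le_of_le <| by
      push_cast; exact mul_le_of_le_one_left (by positivity) ht.2
  have hs_le : ∀ n, s n ≤ t := fun n =>
    (div_le_iff₀ (by positivity)).2 (Nat.floor_le (mul_nonneg ht.1 (by positivity)))
  refine le_of_tendsto_of_tendsto' tendsto_const_nhds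
    ((hs_tendsto.mul_const _).add ((tendsto_const_nhds.sub hs_tendsto).mul_const _)) fun n => ?_
  exact (hle (s n) ⟨(hs_mem n).1.1, hs_le n⟩).trans ((hs_mem n).2 x hx y hy)

end MidpointConvexOn

namespace WrightConvexOn

theorem add_le_add (hf : WrightConvexOn I f) {x y m : ℝ} (hx : x ∈ I) (hy : y ∈ I)
    (hm : m ∈ Set.uIcc x y) : f m + f (x + y - m) ≤ f x + f y := by
  rw [← segment_eq_uIcc] at hm
  obtain ⟨a, b, ha, hb, hab, rfl⟩ := hm
  obtain rfl : b = 1 - a := by linarith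
  convert hf x hx y hy a ⟨ha, by linarith⟩ using 3
  simp only [smul_eq_mul]; ring

theorem midpointConvexOn (hf : WrightConvexOn I f) : MidpointConvexOn I f := fun x hx y hy => by
  have := hf.add_le_add hx hy (m := (x + y) / 2)
    (mem_uIcc_of_mul_nonneg (by nlinarith [sq_nonneg (y - x)]))
  rw [show x + y - (x + y) / 2 = (x + y) / 2 by ring] at this
  linarith

theorem sub_le_sub (hf : WrightConvexOn I f) {u v h : ℝ} (hu : u ∈ I) (hvh : v + h ∈ I)
    (huv : u ≤ v) (hh : 0 ≤ h) : f (u + h) - f u ≤ f (v + h) - f v := by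
  have := hf.add_le_add hu hvh (m := u + h) (mem_uIcc_of_mul_nonneg (by nlinarith))
  rw [show u + (v + h) - (u + h) = v by ring] at this
  linarith

theorem sub_additive (hf : WrightConvexOn I f) {a : ℝ → ℝ} (ha : ∀ x y, a (x + y) = a x + a y) :
    WrightConvexOn I (fun x => f x - a x) := fun x hx y hy t ht => by
  have hsum : a (t * x + (1 - t) * y) + a ((1 - t) * x + t * y) = a x + a y := by
    rw [← ha, ← ha]; ring_nf
  linarith [hf x hx y hy t ht]

theorem le_of_isMinOn (hf : WrightConvexOn I f) (hI : I.OrdConnected) {p w m : ℝ} (hp : p ∈ I)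
    (hw : w ∈ I) (hmin : IsMinOn f I p) (hm : m ∈ Set.uIcc p w) : f m ≤ f w := by
  have hm' : p + w - m ∈ Set.uIcc p w := by
    rw [Set.mem_uIcc] at hm ⊢
    rcases hm with ⟨h1, h2⟩ | ⟨h1, h2⟩
    exacts [Or.inl ⟨by linarith, by linarith⟩, Or.inr ⟨by linarith, by linarith⟩]
  linarith [hf.add_le_add hp hw hm, isMinOn_iff.1 hmin _ (hI.uIcc_subset hp hw hm')]

theorem convexOn_of_isMinOn (hf : WrightConvexOn I f) (hI : I.OrdConnected) {p : ℝ}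
    (hp : p ∈ I) (hmin : IsMinOn f I p) : ConvexOn ℝ I f := by
  -- If `p` lies on the `x`-side of `m = t x + (1 - t) y`, then `f` only grows from `m` towards `y`.
  have key : ∀ x ∈ I, ∀ y ∈ I, ∀ t ∈ Set.Icc (0 : ℝ) 1,
      0 ≤ (t * x + (1 - t) * y - p) * (y - x) →
      f (t * x + (1 - t) * y) ≤ t * f x + (1 - t) * f y := by
    intro x hx y hy t ht hside
    refine hf.midpointConvexOn.le_of_forall_le_segment hI.convex hx hy ht fun s hs => ?_
    refine hf.le_of_isMinOn hI hp
      (hI.convex hx hy hs.1 (by linarith [hs.2, ht.2]) (add_sub_cancel s 1)) hmin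
      (mem_uIcc_of_mul_nonneg ?_)
    have hz : s * x + (1 - s) * y - (t * x + (1 - t) * y) = (t - s) * (y - x) := by ring
    rw [hz, mul_left_comm]
    exact mul_nonneg (sub_nonneg.2 hs.2) hside
  refine ⟨hI.convex, fun x hx y hy a b ha hb hab => ?_⟩
  obtain rfl : b = 1 - a := by linarith
  rcases le_total 0 ((a * x + (1 - a) * y - p) * (y - x)) with hside | hside
  · exact key x hx y hy a ⟨ha, by linarith⟩ hside
  · have := key y hy x hx (1 - a) ⟨hb, by linarith⟩ (by nlinarith)
    rw [show (1 - a) * y + (1 - (1 - a)) * x = a * x + (1 - a) * y by ring] at this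
    simp only [smul_eq_mul]
    linarith

end WrightConvexOn

noncomputable def dyadicQuot (f : ℝ → ℝ) (x h : ℝ) (n : ℕ) : ℝ :=
  2 ^ n * (f (x + h / 2 ^ n) - f x)

/-- A junk value unless the quotients converge, as they do by `tendsto_dyadicDeriv`. -/
noncomputable def dyadicDeriv (f : ℝ → ℝ) (x h : ℝ) : ℝ :=
  limUnder atTop (dyadicQuot f x h)

theorem tendsto_div_two_pow (h : ℝ) : Tendsto (fun n : ℕ => h / 2 ^ n) atTop (𝓝 0) :=
  tendsto_const_nhds.div_atTop (tendsto_pow_atTop_atTop_of_one_lt one_lt_two)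

theorem eventually_add_div_two_pow_mem (hI : IsOpen I) {x : ℝ} (hx : x ∈ I) (h : ℝ) :
    ∀ᶠ n : ℕ in atTop, x + h / 2 ^ n ∈ I := by
  have : Tendsto (fun n : ℕ => x + h / 2 ^ n) atTop (𝓝 x) := by
    simpa using (tendsto_div_two_pow h).const_add x
  exact this.eventually (hI.mem_nhds hx)

namespace MidpointConvexOn

variable {x h : ℝ}

theorem dyadicQuot_succ_le (hf : MidpointConvexOn I f) {n : ℕ} (hx : x ∈ I)
    (hxh : x + h / 2 ^ n ∈ I) : dyadicQuot f x h (n + 1) ≤ dyadicQuot f x h n := by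
  have := hf x hx _ hxh
  rw [show (x + (x + h / 2 ^ n)) / 2 = x + h / 2 ^ (n + 1) by ring] at this
  have e : (2 : ℝ) ^ (n + 1) * (f (x + h / 2 ^ (n + 1)) - f x)
      = 2 ^ n * (2 * (f (x + h / 2 ^ (n + 1)) - f x)) := by ring
  simp only [dyadicQuot]
  rw [e]
  exact mul_le_mul_of_nonneg_left (by linarith) (by positivity)

theorem antitone_dyadicQuot (hf : MidpointConvexOn I f) (hx : x ∈ I) {N : ℕ}
    (hN : ∀ n ≥ N, x + h / 2 ^ n ∈ I) : Antitone fun n => dyadicQuot f x h (n + N) :=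
  antitone_nat_of_succ_le fun n => by
    rw [add_right_comm]
    exact hf.dyadicQuot_succ_le hx (hN (n + N) (Nat.le_add_left N n))

theorem dyadicQuot_add_neg_nonneg (hf : MidpointConvexOn I f) {n : ℕ} (h₁ : x + h / 2 ^ n ∈ I)
    (h₂ : x + -h / 2 ^ n ∈ I) : 0 ≤ dyadicQuot f x h n + dyadicQuot f x (-h) n := by
  have := hf _ h₁ _ h₂
  rw [show (x + h / 2 ^ n + (x + -h / 2 ^ n)) / 2 = x by ring] at this
  simp only [dyadicQuot]
  rw [← mul_add]
  exact mul_nonneg (by positivity) (by linarith)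

theorem tendsto_dyadicDeriv (hf : MidpointConvexOn I f) (hI : IsOpen I) (hx : x ∈ I) (h : ℝ) :
    Tendsto (dyadicQuot f x h) atTop (𝓝 (dyadicDeriv f x h)) := by
  obtain ⟨N, hN⟩ := eventually_atTop.1 ((eventually_add_div_two_pow_mem hI hx h).and
    (eventually_add_div_two_pow_mem hI hx (-h)))
  have hanti := hf.antitone_dyadicQuot hx fun n hn => (hN n hn).1
  have hbdd : BddBelow (Set.range fun n => dyadicQuot f x h (n + N)) := by
    refine ⟨-dyadicQuot f x (-h) (0 + N), ?_⟩
    rintro _ ⟨n, rfl⟩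
    have hsum := hf.dyadicQuot_add_neg_nonneg (hN (n + N) (by omega)).1
      (hN (n + N) (by omega)).2
    have hmono := hf.antitone_dyadicQuot hx (fun n hn => (hN n hn).2) (Nat.zero_le n)
    linarith
  exact tendsto_nhds_limUnder
    ⟨_, (tendsto_add_atTop_iff_nat N).1 (tendsto_atTop_ciInf hanti hbdd)⟩

theorem dyadicDeriv_le_sub (hf : MidpointConvexOn I f) (hI : IsOpen I) (hIc : Convex ℝ I)
    (hx : x ∈ I) (hxh : x + h ∈ I) : dyadicDeriv f x h ≤ f (x + h) - f x := by
  have hmem : ∀ n : ℕ, x + h / 2 ^ n ∈ I := fun n => by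
    have := hIc.add_smul_mem hx hxh (t := ((2 : ℝ) ^ n)⁻¹)
      ⟨by positivity, inv_le_one_of_one_le₀ (one_le_pow₀ one_le_two)⟩
    rwa [smul_eq_mul, inv_mul_eq_div] at this
  have := (hf.antitone_dyadicQuot hx (N := 0) fun n _ => hmem n).le_of_tendsto
    ((tendsto_add_atTop_iff_nat 0).2 (hf.tendsto_dyadicDeriv hI hx h)) 0
  simpa [dyadicQuot] using this

theorem dyadicDeriv_add_neg_nonneg (hf : MidpointConvexOn I f) (hI : IsOpen I) (hx : x ∈ I)
    (h : ℝ) : 0 ≤ dyadicDeriv f x h + dyadicDeriv f x (-h) :=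
  ge_of_tendsto ((hf.tendsto_dyadicDeriv hI hx h).add (hf.tendsto_dyadicDeriv hI hx (-h))) <|
    ((eventually_add_div_two_pow_mem hI hx h).and (eventually_add_div_two_pow_mem hI hx (-h))).mono
      fun _ hn => hf.dyadicQuot_add_neg_nonneg hn.1 hn.2

theorem dyadicDeriv_div_two_pow (hf : MidpointConvexOn I f) (hI : IsOpen I) (hx : x ∈ I)
    (h : ℝ) (m : ℕ) : dyadicDeriv f x (h / 2 ^ m) = dyadicDeriv f x h / 2 ^ m := by
  have hshift : dyadicQuot f x (h / 2 ^ m) = fun n => dyadicQuot f x h (n + m) / 2 ^ m := by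
    ext n
    simp only [dyadicQuot, pow_add, div_div]
    field_simp
  refine tendsto_nhds_unique (hf.tendsto_dyadicDeriv hI hx _) ?_
  rw [hshift]
  exact ((tendsto_add_atTop_iff_nat m).2 (hf.tendsto_dyadicDeriv hI hx h)).div_const _

end MidpointConvexOn

theorem map_add_of_map_neg_of_mul_nonneg {A : ℝ → ℝ} (hneg : ∀ h, A (-h) = -A h)
    (hadd : ∀ a b, 0 ≤ a * b → A (a + b) = A a + A b) (x y : ℝ) : A (x + y) = A x + A y := by
  rcases le_total 0 (x * y) with hxy | hxy
  · exact hadd x y hxy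
  rcases le_total (x ^ 2) (y ^ 2) with hle | hle
  · have := hadd (x + y) (-x) (by rcases le_total 0 x with h | h <;> nlinarith)
    rw [add_neg_cancel_comm, hneg] at this
    linarith
  · have := hadd (x + y) (-y) (by rcases le_total 0 y with h | h <;> nlinarith)
    rw [add_neg_cancel_right, hneg] at this
    linarith

namespace WrightConvexOn

variable {x : ℝ}

theorem dyadicDeriv_le_neg_dyadicDeriv_neg (hf : WrightConvexOn I f) (hI : IsOpen I) {y h : ℝ}
    (hx : x ∈ I) (hy : y ∈ I) (hxy : x < y) (hh : 0 ≤ h) :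
    dyadicDeriv f x h ≤ -dyadicDeriv f y (-h) := by
  have hmid := hf.midpointConvexOn
  refine le_of_tendsto_of_tendsto (hmid.tendsto_dyadicDeriv hI hx h)
    (hmid.tendsto_dyadicDeriv hI hy (-h)).neg ?_
  filter_upwards [(tendsto_div_two_pow h).eventually (gt_mem_nhds (sub_pos.2 hxy))] with n hn
  have := hf.sub_le_sub hx (v := y - h / 2 ^ n) (by simpa using hy) (by linarith)
    (by positivity : 0 ≤ h / 2 ^ n)
  rw [sub_add_cancel] at this
  simp only [dyadicQuot]
  rw [neg_div, ← sub_eq_add_neg, ← mul_neg, neg_sub]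
  exact mul_le_mul_of_nonneg_left (by linarith) (by positivity)

theorem dyadicDeriv_add_neg_le (hf : WrightConvexOn I f) (hI : IsOpen I) (hx : x ∈ I)
    {h h' : ℝ} (hh : 0 ≤ h) (hh' : h ≤ h') :
    dyadicDeriv f x h + dyadicDeriv f x (-h) ≤ dyadicDeriv f x h' + dyadicDeriv f x (-h') := by
  have hmid := hf.midpointConvexOn
  refine le_of_tendsto_of_tendsto
    ((hmid.tendsto_dyadicDeriv hI hx h).add (hmid.tendsto_dyadicDeriv hI hx (-h)))
    ((hmid.tendsto_dyadicDeriv hI hx h').add (hmid.tendsto_dyadicDeriv hI hx (-h'))) ?_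
  filter_upwards [eventually_add_div_two_pow_mem hI hx h',
    eventually_add_div_two_pow_mem hI hx (-h')] with n h₁ h₂
  have hm : x + h / 2 ^ n ∈ Set.uIcc (x + -h' / 2 ^ n) (x + h' / 2 ^ n) := by
    refine mem_uIcc_of_mul_nonneg ?_
    rw [show x + h / 2 ^ n - (x + -h' / 2 ^ n) = (h + h') / 2 ^ n by ring,
      show x + h' / 2 ^ n - (x + h / 2 ^ n) = (h' - h) / 2 ^ n by ring]
    exact mul_nonneg (div_nonneg (by linarith) (by positivity))
      (div_nonneg (by linarith) (by positivity))
  have := hf.add_le_add h₂ h₁ hm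
  rw [show x + -h' / 2 ^ n + (x + h' / 2 ^ n) - (x + h / 2 ^ n) = x + -h / 2 ^ n by ring] at this
  simp only [dyadicQuot]
  rw [← mul_add, ← mul_add]
  exact mul_le_mul_of_nonneg_left (by linarith) (by positivity)

theorem dyadicDeriv_add_le (hf : WrightConvexOn I f) (hI : IsOpen I) (hx : x ∈ I) {h₁ h₂ : ℝ}
    (h12 : 0 ≤ h₁ * h₂) :
    dyadicDeriv f x h₁ + dyadicDeriv f x h₂ ≤ dyadicDeriv f x (h₁ + h₂) := by
  have hmid := hf.midpointConvexOn
  refine le_of_tendsto_of_tendsto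
    ((hmid.tendsto_dyadicDeriv hI hx h₁).add (hmid.tendsto_dyadicDeriv hI hx h₂))
    (hmid.tendsto_dyadicDeriv hI hx (h₁ + h₂)) ?_
  filter_upwards [eventually_add_div_two_pow_mem hI hx (h₁ + h₂)] with n hn
  have hm : x + h₁ / 2 ^ n ∈ Set.uIcc x (x + (h₁ + h₂) / 2 ^ n) := by
    refine mem_uIcc_of_mul_nonneg ?_
    rw [show x + h₁ / 2 ^ n - x = h₁ / 2 ^ n by ring,
      show x + (h₁ + h₂) / 2 ^ n - (x + h₁ / 2 ^ n) = h₂ / 2 ^ n by ring, div_mul_div_comm]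
    exact div_nonneg h12 (by positivity)
  have := hf.add_le_add hx hn hm
  rw [show x + (x + (h₁ + h₂) / 2 ^ n) - (x + h₁ / 2 ^ n) = x + h₂ / 2 ^ n by ring] at this
  simp only [dyadicQuot]
  rw [← mul_add]
  exact mul_le_mul_of_nonneg_left (by linarith) (by positivity)

theorem dyadicDeriv_neg (hf : WrightConvexOn I f) (hI : IsOpen I) (hx : x ∈ I)
    (hx₁ : dyadicDeriv f x 1 + dyadicDeriv f x (-1) ≤ 0) (h : ℝ) :
    dyadicDeriv f x (-h) = -dyadicDeriv f x h := by
  have hmid := hf.midpointConvexOn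
  have hnonpos : ∀ h, 0 ≤ h → dyadicDeriv f x h + dyadicDeriv f x (-h) ≤ 0 := fun h hh => by
    obtain ⟨m, hm⟩ := pow_unbounded_of_one_lt h (one_lt_two : (1 : ℝ) < 2)
    have hscale : dyadicDeriv f x (2 ^ m) + dyadicDeriv f x (-2 ^ m)
        = 2 ^ m * (dyadicDeriv f x 1 + dyadicDeriv f x (-1)) := by
      have h1 := hmid.dyadicDeriv_div_two_pow hI hx (2 ^ m) m
      have h2 := hmid.dyadicDeriv_div_two_pow hI hx (-2 ^ m) m
      rw [div_self (by positivity)] at h1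
      rw [neg_div, div_self (by positivity)] at h2
      rw [h1, h2]
      field_simp
    have := mul_nonpos_of_nonneg_of_nonpos (by positivity : (0 : ℝ) ≤ 2 ^ m) hx₁
    linarith [hf.dyadicDeriv_add_neg_le hI hx hh hm.le]
  have := hmid.dyadicDeriv_add_neg_nonneg hI hx h
  rcases le_total 0 h with hh | hh
  · linarith [hnonpos h hh]
  · have := hnonpos (-h) (by linarith)
    rw [neg_neg] at this
    linarith

theorem dyadicDeriv_add_of_add_neg_one_nonpos (hf : WrightConvexOn I f) (hI : IsOpen I)
    (hx : x ∈ I) (hx₁ : dyadicDeriv f x 1 + dyadicDeriv f x (-1) ≤ 0) (h₁ h₂ : ℝ) :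
    dyadicDeriv f x (h₁ + h₂) = dyadicDeriv f x h₁ + dyadicDeriv f x h₂ := by
  have hneg := hf.dyadicDeriv_neg hI hx hx₁
  refine map_add_of_map_neg_of_mul_nonneg hneg (fun a b hab => le_antisymm ?_
    (hf.dyadicDeriv_add_le hI hx hab)) h₁ h₂
  have := hf.dyadicDeriv_add_le hI hx (h₁ := -a) (h₂ := -b) (by rwa [neg_mul_neg])
  rw [← neg_add, hneg, hneg, hneg] at this
  linarith

end WrightConvexOn

end

/-- Ng's decomposition theorem: a Wright convex function is the sum of a convex
function and an additive function. -/
theorem ng_decomposition (I : Set ℝ) (hI : ProperOpenInterval I) (f : ℝ → ℝ)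
    (hf : ∀ x ∈ I, ∀ y ∈ I, ∀ t ∈ Set.Icc (0 : ℝ) 1,
      f (t * x + (1 - t) * y) + f ((1 - t) * x + t * y) ≤ f x + f y) :
    ∃ g a : ℝ → ℝ,
      (∀ x ∈ I, ∀ y ∈ I, ∀ t ∈ Set.Icc (0 : ℝ) 1,
        g (t * x + (1 - t) * y) ≤ t * g x + (1 - t) * g y) ∧
      (∀ x y : ℝ, a (x + y) = a x + a y) ∧
      (∀ x ∈ I, f x = g x + a x) := by
  obtain ⟨hIo, hIc, ⟨p₀, hp₀⟩, -⟩ := hI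
  have hW : WrightConvexOn I f := hf
  obtain ⟨c, d, hp₀cd, hcd⟩ := mem_nhds_iff_exists_Ioo_subset.1 (hIo.mem_nhds hp₀)
  obtain ⟨p, hp, hp₁⟩ := Real.exists_le_of_forall_lt_le (hp₀cd.1.trans hp₀cd.2)
    (a := fun x => -dyadicDeriv f x (-1)) (b := fun x => dyadicDeriv f x 1)
    fun x hx y hy hxy =>
      hW.dyadicDeriv_le_neg_dyadicDeriv_neg hIo (hcd hx) (hcd hy) hxy zero_le_one
  have ha := hW.dyadicDeriv_add_of_add_neg_one_nonpos hIo (hcd hp) (by linarith)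
  have hmin : IsMinOn (fun x => f x - dyadicDeriv f p x) I p := isMinOn_iff.2 fun x hx => by
    have hle := hW.midpointConvexOn.dyadicDeriv_le_sub hIo hIc.convex (hcd hp) (h := x - p)
      (by simpa)
    have hsplit := ha (x - p) p
    rw [add_sub_cancel] at hle
    rw [sub_add_cancel] at hsplit
    linarith
  have hconv := (hW.sub_additive ha).convexOn_of_isMinOn hIc (hcd hp) hmin
  refine ⟨fun x => f x - dyadicDeriv f p x, dyadicDeriv f p, fun x hx y hy t ht => ?_, ha,
    fun x _ => by ring⟩
  exact hconv.2 hx hy ht.1 (sub_nonneg.2 ht.2) (add_sub_cancel t 1)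
end
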